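/- arXiv:2201.02191 — 6 statements merged into one kernel-verified Lean document; each statement's English description precedes it below -/
import Mathlib

section
/- For every symmetric tensor T in Sym^d(ℂⁿ), the spectral norm satisfies ‖T‖_∞ ≥ C(d+n-1,d)^(-1/2)·‖T‖, where ‖T‖ is the Frobenius norm. Hence the best rank-one approximation ratio of Sym^d(ℂⁿ) is at least C(d+n-1,d)^(-1/2). -/
namespace Stmt11
open Finset Nat MeasureTheory Real Complex



variable {n d : ℕ}

def cnt (i : Fin d → Fin n) (j : Fin n) : ℕ := (univ.filter fun k => i k = j).card

lemma cnt_le (i : Fin d → Fin n) (j : Fin n) : cnt i j ≤ d := by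
  classical
  exact le_trans (Finset.card_filter_le _ _) (by simp)

lemma cnt_eq_card (i : Fin d → Fin n) (j : Fin n) :
    cnt i j = Fintype.card {k // i k = j} := (Fintype.card_subtype _).symm

lemma prod_pow_cnt {β : Type*} [CommMonoid β] (x : Fin n → β) (i : Fin d → Fin n) :
    ∏ k, x (i k) = ∏ j, x j ^ cnt i j := by
  classical
  rw [← Finset.prod_fiberwise_of_maps_to (g := i) (fun k _ => Finset.mem_univ (i k))
    (fun k => x (i k))]
  refine Finset.prod_congr rfl fun j _ => ?_
  rw [Finset.prod_congr rfl (fun k hk => ?_), Finset.prod_const, cnt]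
  · exact (Finset.mem_filter.mp hk).2 ▸ rfl

lemma card_stab (i : Fin d → Fin n) :
    Fintype.card {σ : Equiv.Perm (Fin d) // i ∘ ⇑σ = i} = ∏ j, (cnt i j)! := by
  classical
  rw [DomMulAct.stabilizer_card]
  exact Finset.prod_congr rfl fun j _ => by rw [cnt_eq_card]

lemma card_fiber (i : Fin d → Fin n) (σ₀ : Equiv.Perm (Fin d)) :
    ((univ : Finset (Equiv.Perm (Fin d))).filter
      fun σ : Equiv.Perm (Fin d) => i ∘ ⇑σ = i ∘ ⇑σ₀).card
      = ∏ j, (cnt i j)! := by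
  classical
  rw [← card_stab i, ← Fintype.card_subtype]
  refine Fintype.card_congr (Equiv.subtypeEquiv (Equiv.mulRight σ₀⁻¹) fun σ => ?_)
  constructor
  · intro h
    funext k
    simp only [Equiv.coe_mulRight, Equiv.Perm.coe_mul, Function.comp_apply]
    have := congrFun h (σ₀⁻¹ k)
    simpa using this
  · intro h
    funext k
    have := congrFun h (σ₀ k)
    simpa using this

lemma image_eq (i : Fin d → Fin n) :
    (univ : Finset (Equiv.Perm (Fin d))).image (fun σ : Equiv.Perm (Fin d) => i ∘ ⇑σ) =
      univ.filter (fun i' => ∀ j, cnt i' j = cnt i j) := by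
  classical
  ext i'
  simp only [mem_image, mem_filter, mem_univ, true_and]
  constructor
  · rintro ⟨σ, rfl⟩ j
    rw [cnt_eq_card, cnt_eq_card]
    exact Fintype.card_congr (σ.subtypeEquiv fun k => Iff.rfl)
  · intro h
    have fibEquiv : ∀ j, {k // i' k = j} ≃ {k // i k = j} := fun j =>
      Fintype.equivOfCardEq (by rw [← cnt_eq_card, ← cnt_eq_card]; exact h j)
    refine ⟨(Equiv.sigmaFiberEquiv i').symm.trans
      ((Equiv.sigmaCongrRight fibEquiv).trans (Equiv.sigmaFiberEquiv i)), ?_⟩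
    funext k
    simpa [Equiv.sigmaFiberEquiv, Equiv.sigmaCongrRight] using (fibEquiv (i' k) ⟨k, rfl⟩).2

lemma card_matched (i : Fin d → Fin n) :
    ((univ.filter (fun i' : Fin d → Fin n => ∀ j, cnt i' j = cnt i j)).card)
      * ∏ j, (cnt i j)! = d ! := by
  classical
  have h1 : ((univ : Finset (Equiv.Perm (Fin d)))).card =
      ∑ i' ∈ ((univ : Finset (Equiv.Perm (Fin d))).image
          (fun σ : Equiv.Perm (Fin d) => i ∘ ⇑σ)),
        ((univ : Finset (Equiv.Perm (Fin d))).filter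
          fun σ : Equiv.Perm (Fin d) => i ∘ ⇑σ = i').card :=
    Finset.card_eq_sum_card_fiberwise (fun σ _ => Finset.mem_image_of_mem _ (mem_univ σ))
  have h3 : ∑ i' ∈ ((univ : Finset (Equiv.Perm (Fin d))).image
          (fun σ : Equiv.Perm (Fin d) => i ∘ ⇑σ)),
        ((univ : Finset (Equiv.Perm (Fin d))).filter
          fun σ : Equiv.Perm (Fin d) => i ∘ ⇑σ = i').card
      = ∑ _i' ∈ ((univ : Finset (Equiv.Perm (Fin d))).image
          (fun σ : Equiv.Perm (Fin d) => i ∘ ⇑σ)), ∏ j, (cnt i j)! := by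
    refine Finset.sum_congr rfl fun i' hi' => ?_
    obtain ⟨σ₀, -, rfl⟩ := Finset.mem_image.mp hi'
    exact card_fiber i σ₀
  rw [h3, Finset.sum_const, image_eq, smul_eq_mul] at h1
  rw [← h1, Finset.card_univ, Fintype.card_perm, Fintype.card_fin]

lemma sum_matched (i : Fin d → Fin n) (g : (Fin d → Fin n) → ℂ) :
    ∑ σ : Equiv.Perm (Fin d), g (i ∘ ⇑σ)
      = ∑ i' ∈ univ.filter (fun i' : Fin d → Fin n => ∀ j, cnt i' j = cnt i j),
          ((∏ j, (cnt i j)! : ℕ) : ℂ) * g i' := by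
  classical
  rw [← Finset.sum_fiberwise_of_maps_to (g := fun σ : Equiv.Perm (Fin d) => i ∘ ⇑σ)
      (t := univ.filter (fun i' : Fin d → Fin n => ∀ j, cnt i' j = cnt i j))
      (fun σ _ => by rw [← image_eq i]; exact Finset.mem_image_of_mem _ (mem_univ σ))
      (fun σ => g (i ∘ ⇑σ))]
  refine Finset.sum_congr rfl fun i' hi' => ?_
  have hi'' : i' ∈ (univ : Finset (Equiv.Perm (Fin d))).image
      (fun σ : Equiv.Perm (Fin d) => i ∘ ⇑σ) := by
    rw [image_eq i]; exact hi'
  obtain ⟨σ₀, -, rfl⟩ := Finset.mem_image.mp hi''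
  have h4 : ∑ σ ∈ ((univ : Finset (Equiv.Perm (Fin d))).filter
        fun σ : Equiv.Perm (Fin d) => i ∘ ⇑σ = i ∘ ⇑σ₀), g (i ∘ ⇑σ)
      = ∑ _σ ∈ ((univ : Finset (Equiv.Perm (Fin d))).filter
        fun σ : Equiv.Perm (Fin d) => i ∘ ⇑σ = i ∘ ⇑σ₀), g (i ∘ ⇑σ₀) :=
    Finset.sum_congr rfl fun σ hσ => congrArg g (Finset.mem_filter.mp hσ).2
  rw [h4, Finset.sum_const, card_fiber i σ₀, nsmul_eq_mul]

def toSym (i : Fin d → Fin n) : Sym (Fin n) d :=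
  ⟨Multiset.map i Finset.univ.val, by simp⟩

lemma count_toSym (i : Fin d → Fin n) (j : Fin n) :
    Multiset.count j (toSym i).1 = cnt i j := by
  rw [toSym, Multiset.count_map, cnt, Finset.card_def, Finset.filter_val]
  congr 1
  exact Multiset.filter_congr fun x _ => eq_comm

lemma toSym_surjective : Function.Surjective (toSym (n := n) (d := d)) := by
  rintro ⟨s, hs⟩
  have hl : s.toList.length = d := by rw [Multiset.length_toList, hs]
  refine ⟨fun k => s.toList.get (Fin.cast hl.symm k), Subtype.ext ?_⟩
  show Multiset.map (fun k => s.toList.get (Fin.cast hl.symm k)) Finset.univ.val = s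
  rw [Fin.univ_val_map]
  conv_rhs => rw [← Multiset.coe_toList s]
  congr 1
  apply List.ext_getElem
  · simp [hl]
  · intro k h1 h2
    simp [List.getElem_ofFn]

lemma sum_prod_factorial :
    ∑ i : Fin d → Fin n, ∏ j, (cnt i j)! = (d + n - 1).choose d * d ! := by
  classical
  have key : ∀ s : Sym (Fin n) d,
      (∑ i ∈ univ.filter (fun i : Fin d → Fin n => toSym i = s), ∏ j, (cnt i j)!) = d ! := by
    intro s
    obtain ⟨i₀, rfl⟩ := toSym_surjective s
    have hset : univ.filter (fun i : Fin d → Fin n => toSym i = toSym i₀)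
        = univ.filter (fun i' : Fin d → Fin n => ∀ j, cnt i' j = cnt i₀ j) := by
      refine Finset.filter_congr fun i _ => ?_
      constructor
      · intro h j
        rw [← count_toSym, ← count_toSym, h]
      · intro h
        apply Subtype.ext
        refine Multiset.ext.mpr fun j => ?_
        rw [count_toSym, count_toSym]
        exact h j
    have hcongr : ∑ i ∈ univ.filter (fun i' : Fin d → Fin n => ∀ j, cnt i' j = cnt i₀ j),
          ∏ j, (cnt i j)!
        = ∑ _i ∈ univ.filter (fun i' : Fin d → Fin n => ∀ j, cnt i' j = cnt i₀ j),
          ∏ j, (cnt i₀ j)! := by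
      refine Finset.sum_congr rfl fun i hi => ?_
      exact Finset.prod_congr rfl fun j _ => by rw [(Finset.mem_filter.mp hi).2 j]
    rw [hset, hcongr, Finset.sum_const, smul_eq_mul, card_matched i₀]
  have hfib := Finset.sum_fiberwise_of_maps_to (g := toSym (n := n) (d := d))
    (s := univ) (t := univ) (fun i _ => mem_univ _) (fun i => ∏ j, (cnt i j)!)
  rw [← hfib, Finset.sum_congr rfl (fun s _ => key s), Finset.sum_const, smul_eq_mul,
    Finset.card_univ, Sym.card_sym_eq_choose, Fintype.card_fin, Nat.add_comm n d]

noncomputable def ephase (m w : ℕ) : ℂ :=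
  Complex.exp ((2 * Real.pi * w / m : ℝ) * Complex.I)

lemma abs_ephase (m w : ℕ) : ‖ephase m w‖ = 1 :=
  Complex.norm_exp_ofReal_mul_I _

lemma phase_sum {m : ℕ} (hm : 0 < m) {a b : ℕ} (ha : a < m) (hb : b < m) :
    ∑ w : Fin m, ephase m (w : ℕ) ^ a * (starRingEnd ℂ) (ephase m (w : ℕ)) ^ b
      = if a = b then (m : ℂ) else 0 := by
  have hterm : ∀ w : ℕ,
      ephase m w ^ a * (starRingEnd ℂ) (ephase m w) ^ b
        = Complex.exp ((2 * Real.pi * ((a : ℝ) - b) / m : ℝ) * Complex.I) ^ w := by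
    intro w
    rw [ephase, ← Complex.exp_conj, ← Complex.exp_nat_mul, ← Complex.exp_nat_mul,
      ← Complex.exp_add, ← Complex.exp_nat_mul]
    congr 1
    simp only [map_mul, Complex.conj_ofReal, Complex.conj_I]
    push_cast
    ring
  have hsum : ∑ w : Fin m, ephase m (w : ℕ) ^ a * (starRingEnd ℂ) (ephase m (w : ℕ)) ^ b
      = ∑ w ∈ range m,
          Complex.exp ((2 * Real.pi * ((a : ℝ) - b) / m : ℝ) * Complex.I) ^ w := by
    rw [← Fin.sum_univ_eq_sum_range
      (fun w => Complex.exp ((2 * Real.pi * ((a : ℝ) - b) / m : ℝ) * Complex.I) ^ w) m]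
    exact Finset.sum_congr rfl fun w _ => hterm (w : ℕ)
  rw [hsum]
  by_cases hab : a = b
  · have h1 : Complex.exp ((2 * Real.pi * ((a : ℝ) - b) / m : ℝ) * Complex.I) = 1 := by
      rw [hab]
      norm_num
    simp [h1, hab]
  · have hmne : (m : ℝ) ≠ 0 := Nat.cast_ne_zero.mpr hm.ne'
    have hrne : Complex.exp ((2 * Real.pi * ((a : ℝ) - b) / m : ℝ) * Complex.I) ≠ 1 := by
      intro h
      obtain ⟨k, hk⟩ := Complex.exp_eq_one_iff.mp h
      have hk' : ((2 * Real.pi * ((a : ℝ) - b) / m : ℝ) : ℂ) * Complex.I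
          = (((k : ℝ) * (2 * Real.pi) : ℝ) : ℂ) * Complex.I := by
        rw [hk]; push_cast; ring
      have hre : 2 * Real.pi * ((a : ℝ) - b) / m = (k : ℝ) * (2 * Real.pi) :=
        Complex.ofReal_inj.mp (mul_right_cancel₀ Complex.I_ne_zero hk')
      have hceq : (a : ℝ) - b = (k : ℝ) * m := by
        field_simp at hre
        nlinarith [Real.pi_pos]
      have hkne : (k : ℝ) ≠ 0 := by
        intro h0
        rw [h0, zero_mul] at hceq
        exact hab (by exact_mod_cast sub_eq_zero.mp hceq)
      have habs : (1 : ℝ) ≤ |(k : ℝ)| := by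
        have := Int.one_le_abs (by exact_mod_cast hkne : k ≠ 0)
        exact_mod_cast this
      have hclt : |(a : ℝ) - b| < m := by
        have h1 : (a : ℝ) < m := by exact_mod_cast ha
        have h2 : (b : ℝ) < m := by exact_mod_cast hb
        have h3 : (0 : ℝ) ≤ (a : ℝ) := Nat.cast_nonneg a
        have h4 : (0 : ℝ) ≤ (b : ℝ) := Nat.cast_nonneg b
        rw [abs_lt]
        constructor <;> linarith
      rw [hceq, abs_mul, Nat.abs_cast] at hclt
      have hmpos : (0 : ℝ) < m := by exact_mod_cast hm
      nlinarith
    have hrm : Complex.exp ((2 * Real.pi * ((a : ℝ) - b) / m : ℝ) * Complex.I) ^ m = 1 := by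
      rw [← Complex.exp_nat_mul]
      have h2 : (m : ℂ) * (((2 * Real.pi * ((a : ℝ) - b) / m : ℝ) : ℂ) * Complex.I)
          = (a : ℂ) * (2 * (Real.pi : ℂ) * Complex.I)
            - (b : ℂ) * (2 * (Real.pi : ℂ) * Complex.I) := by
        have hmc : (m : ℂ) ≠ 0 := Nat.cast_ne_zero.mpr hm.ne'
        push_cast
        field_simp
      rw [h2, Complex.exp_sub, Complex.exp_nat_mul_two_pi_mul_I,
        Complex.exp_nat_mul_two_pi_mul_I]
      norm_num
    rw [geom_sum_eq hrne, hrm]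
    simp [hab]

noncomputable def g (a : ℕ) (x : ℝ) : ℝ :=
  if 0 < x then Real.exp (-x) * (Real.sqrt x) ^ a else 0

lemma g_eq_indicator (a : ℕ) :
    g a = (Set.Ioi (0 : ℝ)).indicator (fun x => Real.exp (-x) * (Real.sqrt x) ^ a) := by
  funext x
  rw [Set.indicator_apply, g]
  simp [Set.mem_Ioi]

lemma gammaIntegrand_eq (a : ℕ) :
    Set.EqOn (fun x : ℝ => Real.exp (-x) * x ^ ((a / 2 + 1 : ℝ) - 1))
      (fun x => Real.exp (-x) * (Real.sqrt x) ^ a) (Set.Ioi 0) := by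
  intro x hx
  have hx0 : (0 : ℝ) ≤ x := (Set.mem_Ioi.mp hx).le
  simp only []
  congr 1
  rw [show ((a / 2 + 1 : ℝ) - 1) = (1 / 2 : ℝ) * a by ring, Real.rpow_mul hx0,
    ← Real.sqrt_eq_rpow, Real.rpow_natCast]

lemma g_integrable (a : ℕ) : Integrable (g a) := by
  rw [g_eq_indicator]
  refine (IntegrableOn.congr_fun ?_ (gammaIntegrand_eq a) measurableSet_Ioi).integrable_indicator
    measurableSet_Ioi
  exact Real.GammaIntegral_convergent (by positivity)

lemma g_integral_even (a : ℕ) : ∫ x, g (2 * a) x = a ! := by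
  rw [g_eq_indicator, MeasureTheory.integral_indicator measurableSet_Ioi]
  have h1 : Set.EqOn (fun x : ℝ => Real.exp (-x) * (Real.sqrt x) ^ (2 * a))
      (fun x => Real.exp (-x) * x ^ ((a + 1 : ℝ) - 1)) (Set.Ioi 0) := by
    intro x hx
    have hx0 : (0 : ℝ) ≤ x := (Set.mem_Ioi.mp hx).le
    simp only []
    congr 1
    rw [pow_mul, Real.sq_sqrt hx0, show ((a + 1 : ℝ) - 1) = (a : ℝ) by ring,
      Real.rpow_natCast]
  rw [setIntegral_congr_fun measurableSet_Ioi h1, ← Real.Gamma_eq_integral (by positivity),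
    Real.Gamma_nat_eq_factorial]


lemma sum_pow (w : Fin n → ℝ) : (∑ j, w j) ^ d = ∑ i : Fin d → Fin n, ∏ j, w j ^ cnt i j := by
  classical
  have h1 : (∑ j, w j) ^ d = ∏ _k : Fin d, ∑ j, w j := by
    rw [Finset.prod_const, Finset.card_univ, Fintype.card_fin]
  rw [h1, Finset.prod_univ_sum, Fintype.piFinset_univ]
  exact Finset.sum_congr rfl fun i _ => prod_pow_cnt w i

noncomputable def fT (T : (Fin d → Fin n) → ℂ) (x : EuclideanSpace ℂ (Fin n)) : ℂ :=
  ∑ i : Fin d → Fin n, T i * ∏ k, x (i k)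

noncomputable def xv (u : Fin n → ℝ) (ω : Fin n → Fin (d + 1)) : EuclideanSpace ℂ (Fin n) :=
  WithLp.toLp 2 (fun j => (Real.sqrt (u j) : ℂ) * ephase (d + 1) (ω j))

lemma sum_omega (T : (Fin d → Fin n) → ℂ) (u : Fin n → ℝ) :
    ((∑ ω : Fin n → Fin (d + 1), ‖fT T (xv u ω)‖ ^ 2 : ℝ) : ℂ)
      = ∑ i : Fin d → Fin n, ∑ i' : Fin d → Fin n,
          T i * (starRingEnd ℂ) (T i')
            * ((∏ j, Real.sqrt (u j) ^ (cnt i j + cnt i' j) : ℝ) : ℂ)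
            * (if ∀ j, cnt i j = cnt i' j then ((d + 1 : ℕ) : ℂ) ^ n else 0) := by
  classical
  -- expand fT at xv
  have hfT : ∀ ω : Fin n → Fin (d + 1), fT T (xv u ω)
      = ∑ i : Fin d → Fin n, T i * (((∏ j, Real.sqrt (u j) ^ cnt i j : ℝ) : ℂ)
          * ∏ j, ephase (d + 1) (ω j) ^ cnt i j) := by
    intro ω
    refine Finset.sum_congr rfl fun i _ => ?_
    rw [prod_pow_cnt (fun j => xv u ω j) i]
    congr 1
    rw [Complex.ofReal_prod, ← Finset.prod_mul_distrib]
    refine Finset.prod_congr rfl fun j _ => ?_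
    rw [Complex.ofReal_pow, ← mul_pow]
    rfl
  have hsq : ∀ z : ℂ, ((‖z‖ ^ 2 : ℝ) : ℂ) = z * (starRingEnd ℂ) z := by
    intro z
    rw [Complex.mul_conj, Complex.normSq_eq_norm_sq]
  rw [Complex.ofReal_sum]
  have step1 : ∀ ω : Fin n → Fin (d + 1),
      ((‖fT T (xv u ω)‖ ^ 2 : ℝ) : ℂ)
        = ∑ i : Fin d → Fin n, ∑ i' : Fin d → Fin n,
            (T i * (((∏ j, Real.sqrt (u j) ^ cnt i j : ℝ) : ℂ)
                * ∏ j, ephase (d + 1) (ω j) ^ cnt i j))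
            * ((starRingEnd ℂ) (T i') * (((∏ j, Real.sqrt (u j) ^ cnt i' j : ℝ) : ℂ)
                * ∏ j, (starRingEnd ℂ) (ephase (d + 1) (ω j)) ^ cnt i' j)) := by
    intro ω
    rw [hsq, hfT ω, map_sum, Finset.sum_mul_sum]
    refine Finset.sum_congr rfl fun i _ => Finset.sum_congr rfl fun i' _ => ?_
    simp only [map_mul, map_prod, map_pow, Complex.conj_ofReal]
  rw [Finset.sum_congr rfl fun ω _ => step1 ω, Finset.sum_comm]
  refine Finset.sum_congr rfl fun i _ => ?_
  rw [Finset.sum_comm]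
  refine Finset.sum_congr rfl fun i' _ => ?_
  -- now fixed (i, i'), sum over ω
  have hre : ∀ ω : Fin n → Fin (d + 1),
      (T i * (((∏ j, Real.sqrt (u j) ^ cnt i j : ℝ) : ℂ)
          * ∏ j, ephase (d + 1) (ω j) ^ cnt i j))
        * ((starRingEnd ℂ) (T i') * (((∏ j, Real.sqrt (u j) ^ cnt i' j : ℝ) : ℂ)
          * ∏ j, (starRingEnd ℂ) (ephase (d + 1) (ω j)) ^ cnt i' j))
      = (T i * (starRingEnd ℂ) (T i')
          * ((∏ j, Real.sqrt (u j) ^ (cnt i j + cnt i' j) : ℝ) : ℂ))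
        * ∏ j, (ephase (d + 1) (ω j) ^ cnt i j
            * (starRingEnd ℂ) (ephase (d + 1) (ω j)) ^ cnt i' j) := by
    intro ω
    rw [Finset.prod_mul_distrib]
    have harr : ((∏ j, Real.sqrt (u j) ^ (cnt i j + cnt i' j) : ℝ) : ℂ)
        = ((∏ j, Real.sqrt (u j) ^ cnt i j : ℝ) : ℂ)
          * ((∏ j, Real.sqrt (u j) ^ cnt i' j : ℝ) : ℂ) := by
      rw [← Complex.ofReal_mul, ← Finset.prod_mul_distrib]
      norm_cast
      exact Finset.prod_congr rfl fun j _ => pow_add _ _ _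
    rw [harr]
    ring
  rw [Finset.sum_congr rfl fun ω _ => hre ω, ← Finset.mul_sum]
  congr 1
  -- ∑ ω, ∏ j (...) = ite
  have hswap : ∑ ω : Fin n → Fin (d + 1), ∏ j, (ephase (d + 1) (ω j) ^ cnt i j
      * (starRingEnd ℂ) (ephase (d + 1) (ω j)) ^ cnt i' j)
      = ∏ j, ∑ w : Fin (d + 1), (ephase (d + 1) (w : ℕ) ^ cnt i j
          * (starRingEnd ℂ) (ephase (d + 1) (w : ℕ)) ^ cnt i' j) := by
    rw [Finset.prod_univ_sum, Fintype.piFinset_univ]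
  rw [hswap, Finset.prod_congr rfl fun j _ => phase_sum (Nat.succ_pos d)
    (Nat.lt_succ_of_le (cnt_le i j)) (Nat.lt_succ_of_le (cnt_le i' j))]
  by_cases hall : ∀ j, cnt i j = cnt i' j
  · rw [if_pos hall, Finset.prod_congr rfl fun j _ => if_pos (hall j), Finset.prod_const,
      Finset.card_univ, Fintype.card_fin]
  · rw [if_neg hall]
    obtain ⟨j0, hj0⟩ := not_forall.mp hall
    exact Finset.prod_eq_zero (mem_univ j0) (if_neg hj0)

lemma ite_mul_sqrt (c : ℕ) (x : ℝ) :
    (if 0 < x then Real.exp (-x) else 0) * Real.sqrt x ^ c = g c x := by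
  by_cases h : 0 < x <;> simp [g, h]

lemma wgt_nonneg (u : Fin n → ℝ) :
    0 ≤ ∏ j, (if 0 < u j then Real.exp (-(u j)) else 0) :=
  Finset.prod_nonneg fun j _ => by split <;> positivity

/-- weighted pointwise identity for the main term -/
lemma wgtP (T : (Fin d → Fin n) → ℂ) (u : Fin n → ℝ) :
    (∏ j, (if 0 < u j then Real.exp (-(u j)) else 0))
        * (∑ ω : Fin n → Fin (d + 1), ‖fT T (xv u ω)‖ ^ 2)
    = ∑ i : Fin d → Fin n, ∑ i' : Fin d → Fin n,
        ((if ∀ j, cnt i j = cnt i' j then ((d + 1 : ℕ) : ℝ) ^ n else 0)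
            * (T i * (starRingEnd ℂ) (T i')).re)
          * ∏ j, g (cnt i j + cnt i' j) (u j) := by
  classical
  have hA : (∑ ω : Fin n → Fin (d + 1), ‖fT T (xv u ω)‖ ^ 2)
      = ∑ i : Fin d → Fin n, ∑ i' : Fin d → Fin n,
          ((∏ j, Real.sqrt (u j) ^ (cnt i j + cnt i' j))
              * (if ∀ j, cnt i j = cnt i' j then ((d + 1 : ℕ) : ℝ) ^ n else 0))
            * (T i * (starRingEnd ℂ) (T i')).re := by
    have h3 := congrArg Complex.re (sum_omega T u)
    rw [Complex.ofReal_re] at h3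
    rw [h3, Complex.re_sum]
    refine Finset.sum_congr rfl fun i _ => ?_
    rw [Complex.re_sum]
    refine Finset.sum_congr rfl fun i' _ => ?_
    have hite : (if ∀ j, cnt i j = cnt i' j then ((d + 1 : ℕ) : ℂ) ^ n else 0)
        = (((if ∀ j, cnt i j = cnt i' j then ((d + 1 : ℕ) : ℝ) ^ n else 0) : ℝ) : ℂ) := by
      split <;> norm_num
    rw [hite, mul_assoc, ← Complex.ofReal_mul, mul_comm (T i * (starRingEnd ℂ) (T i')),
      Complex.re_ofReal_mul]
    try ring
  rw [hA, Finset.mul_sum]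
  refine Finset.sum_congr rfl fun i _ => ?_
  rw [Finset.mul_sum]
  refine Finset.sum_congr rfl fun i' _ => ?_
  have hprod : (∏ j, (if 0 < u j then Real.exp (-(u j)) else 0))
      * ∏ j, Real.sqrt (u j) ^ (cnt i j + cnt i' j)
      = ∏ j, g (cnt i j + cnt i' j) (u j) := by
    rw [← Finset.prod_mul_distrib]
    exact Finset.prod_congr rfl fun j _ => ite_mul_sqrt _ _
  calc (∏ j, (if 0 < u j then Real.exp (-(u j)) else 0))
        * (((∏ j, Real.sqrt (u j) ^ (cnt i j + cnt i' j))
            * (if ∀ j, cnt i j = cnt i' j then ((d + 1 : ℕ) : ℝ) ^ n else 0))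
          * (T i * (starRingEnd ℂ) (T i')).re)
      = ((if ∀ j, cnt i j = cnt i' j then ((d + 1 : ℕ) : ℝ) ^ n else 0)
            * (T i * (starRingEnd ℂ) (T i')).re)
        * ((∏ j, (if 0 < u j then Real.exp (-(u j)) else 0))
            * ∏ j, Real.sqrt (u j) ^ (cnt i j + cnt i' j)) := by ring
    _ = _ := by rw [hprod]

/-- weighted pointwise identity for the bound term -/
lemma wgtW (u : Fin n → ℝ) :
    (∏ j, (if 0 < u j then Real.exp (-(u j)) else 0)) * (∑ j, Real.sqrt (u j) ^ 2) ^ d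
      = ∑ i : Fin d → Fin n, ∏ j, g (2 * cnt i j) (u j) := by
  classical
  rw [sum_pow (fun j => Real.sqrt (u j) ^ 2), Finset.mul_sum]
  refine Finset.sum_congr rfl fun i _ => ?_
  have h1 : ∀ j, (Real.sqrt (u j) ^ 2) ^ cnt i j = Real.sqrt (u j) ^ (2 * cnt i j) :=
    fun j => (pow_mul _ 2 _).symm
  rw [Finset.prod_congr rfl fun j _ => h1 j, ← Finset.prod_mul_distrib]
  exact Finset.prod_congr rfl fun j _ => ite_mul_sqrt _ _

lemma integrable_prod_g (c : Fin n → ℕ) :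
    Integrable (fun u : Fin n → ℝ => ∏ j, g (c j) (u j)) :=
  Integrable.fintype_prod (f := fun j => g (c j)) fun _ => g_integrable _

lemma integral_prod_g (c : Fin n → ℕ) :
    ∫ u : Fin n → ℝ, ∏ j, g (c j) (u j) = ∏ j, ∫ x : ℝ, g (c j) x :=
  integral_fintype_prod_eq_prod (fun j => g (c j))

lemma hsqnorm (z : ℂ) : z * (starRingEnd ℂ) z = ((‖z‖ ^ 2 : ℝ) : ℂ) := by
  rw [Complex.mul_conj, Complex.normSq_eq_norm_sq]


lemma inner_val (T : (Fin d → Fin n) → ℂ)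
    (hsymm : ∀ (σ : Equiv.Perm (Fin d)) (i : Fin d → Fin n), T (i ∘ σ) = T i)
    (i : Fin d → Fin n) :
    ∑ i' : Fin d → Fin n, (((if ∀ j, cnt i j = cnt i' j then ((d + 1 : ℕ) : ℝ) ^ n else 0)
        * (T i * (starRingEnd ℂ) (T i')).re) * ∏ j, ∫ x : ℝ, g (cnt i j + cnt i' j) x)
    = ((d + 1 : ℕ) : ℝ) ^ n * ((d ! : ℕ) * ‖T i‖ ^ 2) := by
  classical
  have step_a : ∀ i' : Fin d → Fin n,
      (((if ∀ j, cnt i j = cnt i' j then ((d + 1 : ℕ) : ℝ) ^ n else 0)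
        * (T i * (starRingEnd ℂ) (T i')).re) * ∏ j, ∫ x : ℝ, g (cnt i j + cnt i' j) x)
      = if ∀ j, cnt i j = cnt i' j
          then ((d + 1 : ℕ) : ℝ) ^ n
            * ((((∏ j, (cnt i j)! : ℕ) : ℂ)) * (T i * (starRingEnd ℂ) (T i'))).re
          else 0 := by
    intro i'
    by_cases h : ∀ j, cnt i j = cnt i' j
    · rw [if_pos h, if_pos h]
      have hval : (∏ j, ∫ x : ℝ, g (cnt i j + cnt i' j) x) = ((∏ j, (cnt i j)! : ℕ) : ℝ) := by
        push_cast
        refine Finset.prod_congr rfl fun j _ => ?_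
        rw [show cnt i j + cnt i' j = 2 * cnt i j by rw [← h j]; ring, g_integral_even]
      rw [hval]
      have hre : ((((∏ j, (cnt i j)! : ℕ) : ℂ)) * (T i * (starRingEnd ℂ) (T i'))).re
          = ((∏ j, (cnt i j)! : ℕ) : ℝ) * (T i * (starRingEnd ℂ) (T i')).re := by
        rw [show (((∏ j, (cnt i j)! : ℕ)) : ℂ)
            = ((((∏ j, (cnt i j)! : ℕ) : ℝ)) : ℂ) by push_cast; rfl,
          Complex.re_ofReal_mul]
      rw [hre]
      ring
    · rw [if_neg h, if_neg h, zero_mul, zero_mul]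
  rw [Finset.sum_congr rfl fun i' _ => step_a i', ← Finset.sum_filter]
  have hflip : (univ.filter (fun i' : Fin d → Fin n => ∀ j, cnt i j = cnt i' j))
      = (univ.filter (fun i' : Fin d → Fin n => ∀ j, cnt i' j = cnt i j)) := by
    refine Finset.filter_congr fun i' _ => ?_
    exact ⟨fun h j => (h j).symm, fun h j => (h j).symm⟩
  rw [hflip, ← Finset.mul_sum, ← Complex.re_sum,
    ← sum_matched i (fun i' => T i * (starRingEnd ℂ) (T i'))]
  have hterm : ∀ σ : Equiv.Perm (Fin d),
      T i * (starRingEnd ℂ) (T (i ∘ ⇑σ)) = ((‖T i‖ ^ 2 : ℝ) : ℂ) := by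
    intro σ
    rw [hsymm σ i, hsqnorm]
  rw [Finset.sum_congr rfl fun σ _ => hterm σ, Finset.sum_const, Finset.card_univ,
    Fintype.card_perm, Fintype.card_fin, nsmul_eq_mul]
  have hcast : ((d ! : ℂ) * ((‖T i‖ ^ 2 : ℝ) : ℂ)) = (((d ! : ℝ) * ‖T i‖ ^ 2 : ℝ) : ℂ) := by
    push_cast
    ring
  rw [hcast, Complex.ofReal_re]

/-- value of the main integral -/
lemma I1val (T : (Fin d → Fin n) → ℂ)
    (hsymm : ∀ (σ : Equiv.Perm (Fin d)) (i : Fin d → Fin n), T (i ∘ σ) = T i) :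
    ∫ u : Fin n → ℝ, (∑ i : Fin d → Fin n, ∑ i' : Fin d → Fin n,
        ((if ∀ j, cnt i j = cnt i' j then ((d + 1 : ℕ) : ℝ) ^ n else 0)
            * (T i * (starRingEnd ℂ) (T i')).re)
          * ∏ j, g (cnt i j + cnt i' j) (u j))
      = ((d + 1 : ℕ) : ℝ) ^ n * ((d ! : ℕ) * ∑ i : Fin d → Fin n, ‖T i‖ ^ 2) := by
  classical
  rw [integral_finset_sum _ (fun i _ => integrable_finset_sum _ (fun i' _ =>
    (integrable_prod_g _).const_mul _))]
  have h1 : ∀ i : Fin d → Fin n,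
      ∫ u : Fin n → ℝ, (∑ i' : Fin d → Fin n,
        ((if ∀ j, cnt i j = cnt i' j then ((d + 1 : ℕ) : ℝ) ^ n else 0)
            * (T i * (starRingEnd ℂ) (T i')).re)
          * ∏ j, g (cnt i j + cnt i' j) (u j))
      = ((d + 1 : ℕ) : ℝ) ^ n * ((d ! : ℕ) * ‖T i‖ ^ 2) := by
    intro i
    rw [integral_finset_sum _ (fun i' _ => (integrable_prod_g _).const_mul _)]
    rw [Finset.sum_congr rfl fun i' _ => by
      rw [MeasureTheory.integral_const_mul, integral_prod_g]]
    exact inner_val T hsymm i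
  rw [Finset.sum_congr rfl fun i _ => h1 i, ← Finset.mul_sum, ← Finset.mul_sum]

/-- value of the bound integral -/
lemma I2val : ∫ u : Fin n → ℝ, (∑ i : Fin d → Fin n, ∏ j, g (2 * cnt i j) (u j))
    = (((d + n - 1).choose d * d ! : ℕ) : ℝ) := by
  classical
  rw [integral_finset_sum _ (fun i _ => integrable_prod_g _)]
  have h1 : ∀ i : Fin d → Fin n,
      (∫ u : Fin n → ℝ, ∏ j, g (2 * cnt i j) (u j)) = ((∏ j, (cnt i j)! : ℕ) : ℝ) := by
    intro i
    rw [integral_prod_g]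
    push_cast
    exact Finset.prod_congr rfl fun j _ => g_integral_even _
  rw [Finset.sum_congr rfl fun i _ => h1 i, ← Nat.cast_sum]
  exact_mod_cast congrArg (Nat.cast : ℕ → ℝ) (sum_prod_factorial (n := n) (d := d))

end Stmt11

open Stmt11 Finset Nat MeasureTheory Real Complex in
/-- Every symmetric tensor `T ∈ Sym^d(ℂⁿ)` satisfies
`‖T‖_∞ ≥ C(d+n-1,d)^(-1/2)·‖T‖`, where `‖T‖_∞ = max_{‖x‖=1}|⟨T,x⊗⋯⊗x⟩|` and `‖T‖` is the
Frobenius norm; equivalently `‖T‖ ≤ √C(d+n-1,d) · ‖T‖_∞`. -/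
theorem stmt_11 (n d : ℕ) (hn : 1 ≤ n) (T : (Fin d → Fin n) → ℂ)
    (hsymm : ∀ (σ : Equiv.Perm (Fin d)) (i : Fin d → Fin n), T (i ∘ σ) = T i) :
    Real.sqrt (∑ i : Fin d → Fin n, ‖T i‖ ^ 2) ≤
      Real.sqrt ((d + n - 1).choose d) *
        ⨆ x : Metric.sphere (0 : EuclideanSpace ℂ (Fin n)) 1,
          ‖∑ i : Fin d → Fin n, T i * ∏ k, (x : EuclideanSpace ℂ (Fin n)) (i k)‖ := by
  classical
  set s : ℝ := ⨆ x : Metric.sphere (0 : EuclideanSpace ℂ (Fin n)) 1,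
      ‖∑ i : Fin d → Fin n, T i * ∏ k, (x : EuclideanSpace ℂ (Fin n)) (i k)‖ with hsdef
  have hsup : s = ⨆ x : Metric.sphere (0 : EuclideanSpace ℂ (Fin n)) 1, ‖fT T ↑x‖ := rfl
  have hcont : Continuous (fT (n := n) (d := d) T) := by
    unfold fT
    refine continuous_finset_sum _ fun i _ => Continuous.mul continuous_const ?_
    exact continuous_finset_prod _ fun k _ =>
      (PiLp.proj (𝕜 := ℂ) 2 (fun _ : Fin n => ℂ) (i k)).continuous
  have hbdd : BddAbove (Set.range fun x : Metric.sphere (0 : EuclideanSpace ℂ (Fin n)) 1 =>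
      ‖fT T ↑x‖) := by
    obtain ⟨C, hC⟩ := (isCompact_sphere (0 : EuclideanSpace ℂ (Fin n)) 1).bddAbove_image
      ((continuous_norm.comp hcont).continuousOn)
    refine ⟨C, ?_⟩
    rintro r ⟨x, rfl⟩
    exact hC (Set.mem_image_of_mem _ x.2)
  have hfle : ∀ x : EuclideanSpace ℂ (Fin n), ‖x‖ = 1 → ‖fT T x‖ ≤ s := by
    intro x hx
    rw [hsup]
    exact le_ciSup hbdd ⟨x, by simpa [mem_sphere_zero_iff_norm] using hx⟩
  have hone : ‖(EuclideanSpace.single (⟨0, hn⟩ : Fin n) (1 : ℂ) :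
      EuclideanSpace ℂ (Fin n))‖ = 1 := by
    rw [EuclideanSpace.norm_single]
    norm_num
  have hs0 : 0 ≤ s := le_trans (norm_nonneg _) (hfle _ hone)
  have hhom : ∀ x : EuclideanSpace ℂ (Fin n), ‖fT T x‖ ≤ ‖x‖ ^ d * s := by
    intro x
    rcases eq_or_ne x 0 with rfl | hx
    · rcases Nat.eq_zero_or_pos d with rfl | hd
      · have hconst : ∀ y z : EuclideanSpace ℂ (Fin n), fT T y = fT T z := by
          intro y z
          unfold fT
          refine Finset.sum_congr rfl fun i _ => ?_
          simp
        have h1 := hfle _ hone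
        rw [hconst (EuclideanSpace.single (⟨0, hn⟩ : Fin n) (1 : ℂ)) 0] at h1
        simpa using h1
      · have h0 : fT T (0 : EuclideanSpace ℂ (Fin n)) = 0 := by
          unfold fT
          refine Finset.sum_eq_zero fun i _ => ?_
          have hz : (0 : EuclideanSpace ℂ (Fin n)) (i ⟨0, hd⟩) = 0 := rfl
          rw [Finset.prod_eq_zero (mem_univ (⟨0, hd⟩ : Fin d)) hz, mul_zero]
        rw [h0, norm_zero, norm_zero, zero_pow hd.ne', zero_mul]
    · have hc0 : 0 < ‖x‖ := norm_pos_iff.mpr hx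
      set y : EuclideanSpace ℂ (Fin n) := ((‖x‖ : ℂ))⁻¹ • x with hy
      have hyn : ‖y‖ = 1 := by
        rw [hy, norm_smul, norm_inv]
        have : ‖((‖x‖ : ℝ) : ℂ)‖ = ‖x‖ := by
          rw [Complex.norm_real, Real.norm_eq_abs, _root_.abs_of_nonneg hc0.le]
        rw [this, inv_mul_cancel₀ hc0.ne']
      have hxy : x = ((‖x‖ : ℝ) : ℂ) • y := by
        rw [hy, smul_smul, mul_inv_cancel₀ (by exact_mod_cast hc0.ne' : ((‖x‖ : ℝ) : ℂ) ≠ 0),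
          one_smul]
      have hfx : fT T x = ((‖x‖ : ℝ) : ℂ) ^ d * fT T y := by
        conv_lhs => rw [hxy]
        unfold fT
        rw [Finset.mul_sum]
        refine Finset.sum_congr rfl fun i _ => ?_
        have hcoord : ∀ j, (((‖x‖ : ℝ) : ℂ) • y) j = ((‖x‖ : ℝ) : ℂ) * y j := fun j => rfl
        rw [Finset.prod_congr rfl fun k _ => hcoord (i k), Finset.prod_mul_distrib,
          Finset.prod_const, Finset.card_univ, Fintype.card_fin]
        ring
      rw [hfx, norm_mul, norm_pow]
      have hnc : ‖((‖x‖ : ℝ) : ℂ)‖ = ‖x‖ := by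
        rw [Complex.norm_real, Real.norm_eq_abs, _root_.abs_of_nonneg hc0.le]
      rw [hnc]
      exact mul_le_mul_of_nonneg_left (hfle y hyn) (pow_nonneg hc0.le d)
  -- norm of xv
  have hxvnorm : ∀ (u : Fin n → ℝ) (ω : Fin n → Fin (d + 1)),
      ‖xv u ω‖ ^ 2 = ∑ j, Real.sqrt (u j) ^ 2 := by
    intro u ω
    rw [EuclideanSpace.norm_eq, Real.sq_sqrt (Finset.sum_nonneg fun j _ => sq_nonneg _)]
    refine Finset.sum_congr rfl fun j _ => ?_
    have hxj : ‖xv u ω j‖ = Real.sqrt (u j) := by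
      have h1 : xv (n := n) u ω j = (Real.sqrt (u j) : ℂ) * ephase (d + 1) (ω j) := rfl
      rw [h1, norm_mul, Complex.norm_real, abs_ephase,
        Real.norm_eq_abs, _root_.abs_of_nonneg (Real.sqrt_nonneg _), mul_one]
    rw [hxj]
  -- pointwise bound
  have hPle : ∀ u : Fin n → ℝ,
      (∑ ω : Fin n → Fin (d + 1), ‖fT T (xv u ω)‖ ^ 2)
        ≤ ((d + 1 : ℕ) : ℝ) ^ n * (s ^ 2 * (∑ j, Real.sqrt (u j) ^ 2) ^ d) := by
    intro u
    have hterm : ∀ ω : Fin n → Fin (d + 1),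
        ‖fT T (xv u ω)‖ ^ 2 ≤ s ^ 2 * (∑ j, Real.sqrt (u j) ^ 2) ^ d := by
      intro ω
      calc ‖fT T (xv u ω)‖ ^ 2 ≤ (‖xv u ω‖ ^ d * s) ^ 2 :=
            pow_le_pow_left₀ (norm_nonneg _) (hhom _) 2
        _ = (‖xv u ω‖ ^ 2) ^ d * s ^ 2 := by ring
        _ = s ^ 2 * (∑ j, Real.sqrt (u j) ^ 2) ^ d := by rw [hxvnorm u ω]; ring
    calc (∑ ω : Fin n → Fin (d + 1), ‖fT T (xv u ω)‖ ^ 2)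
        ≤ ∑ _ω : Fin n → Fin (d + 1), s ^ 2 * (∑ j, Real.sqrt (u j) ^ 2) ^ d :=
          Finset.sum_le_sum fun ω _ => hterm ω
      _ = ((d + 1 : ℕ) : ℝ) ^ n * (s ^ 2 * (∑ j, Real.sqrt (u j) ^ 2) ^ d) := by
          rw [Finset.sum_const, Finset.card_univ, Fintype.card_fun, Fintype.card_fin,
            Fintype.card_fin, nsmul_eq_mul]
          push_cast
          ring
  -- integral comparison
  have hmono : ((d + 1 : ℕ) : ℝ) ^ n * ((d ! : ℕ) * ∑ i : Fin d → Fin n, ‖T i‖ ^ 2)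
      ≤ (((d + 1 : ℕ) : ℝ) ^ n * s ^ 2) * (((d + n - 1).choose d * d ! : ℕ) : ℝ) := by
    have hle : ∀ u : Fin n → ℝ,
        (∑ i : Fin d → Fin n, ∑ i' : Fin d → Fin n,
          ((if ∀ j, cnt i j = cnt i' j then ((d + 1 : ℕ) : ℝ) ^ n else 0)
              * (T i * (starRingEnd ℂ) (T i')).re)
            * ∏ j, g (cnt i j + cnt i' j) (u j))
        ≤ (((d + 1 : ℕ) : ℝ) ^ n * s ^ 2)
            * ∑ i : Fin d → Fin n, ∏ j, g (2 * cnt i j) (u j) := by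
      intro u
      rw [← wgtP T u, ← wgtW u]
      calc (∏ j, (if 0 < u j then Real.exp (-(u j)) else 0))
            * (∑ ω : Fin n → Fin (d + 1), ‖fT T (xv u ω)‖ ^ 2)
          ≤ (∏ j, (if 0 < u j then Real.exp (-(u j)) else 0))
            * (((d + 1 : ℕ) : ℝ) ^ n * (s ^ 2 * (∑ j, Real.sqrt (u j) ^ 2) ^ d)) :=
            mul_le_mul_of_nonneg_left (hPle u) (wgt_nonneg u)
        _ = (((d + 1 : ℕ) : ℝ) ^ n * s ^ 2)
            * ((∏ j, (if 0 < u j then Real.exp (-(u j)) else 0))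
              * (∑ j, Real.sqrt (u j) ^ 2) ^ d) := by ring
    have hint1 : Integrable (fun u : Fin n → ℝ =>
        ∑ i : Fin d → Fin n, ∑ i' : Fin d → Fin n,
          ((if ∀ j, cnt i j = cnt i' j then ((d + 1 : ℕ) : ℝ) ^ n else 0)
              * (T i * (starRingEnd ℂ) (T i')).re)
            * ∏ j, g (cnt i j + cnt i' j) (u j)) :=
      integrable_finset_sum _ fun i _ => integrable_finset_sum _ fun i' _ =>
        (integrable_prod_g _).const_mul _
    have hint2 : Integrable (fun u : Fin n → ℝ =>
        (((d + 1 : ℕ) : ℝ) ^ n * s ^ 2)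
          * ∑ i : Fin d → Fin n, ∏ j, g (2 * cnt i j) (u j)) :=
      (integrable_finset_sum _ fun i _ => integrable_prod_g _).const_mul _
    have := MeasureTheory.integral_mono hint1 hint2 hle
    rwa [I1val T hsymm, MeasureTheory.integral_const_mul, I2val] at this
  -- cancel
  have hkey : (∑ i : Fin d → Fin n, ‖T i‖ ^ 2) ≤ ((d + n - 1).choose d : ℝ) * s ^ 2 := by
    have hpos : (0 : ℝ) < ((d + 1 : ℕ) : ℝ) ^ n * (d ! : ℕ) := by positivity
    have harr : (((d + 1 : ℕ) : ℝ) ^ n * (d ! : ℕ))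
          * (∑ i : Fin d → Fin n, ‖T i‖ ^ 2)
        ≤ (((d + 1 : ℕ) : ℝ) ^ n * (d ! : ℕ))
          * (((d + n - 1).choose d : ℝ) * s ^ 2) := by
      calc (((d + 1 : ℕ) : ℝ) ^ n * (d ! : ℕ)) * (∑ i : Fin d → Fin n, ‖T i‖ ^ 2)
          = ((d + 1 : ℕ) : ℝ) ^ n * ((d ! : ℕ) * ∑ i : Fin d → Fin n, ‖T i‖ ^ 2) := by ring
        _ ≤ (((d + 1 : ℕ) : ℝ) ^ n * s ^ 2) * (((d + n - 1).choose d * d ! : ℕ) : ℝ) := hmono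
        _ = (((d + 1 : ℕ) : ℝ) ^ n * (d ! : ℕ)) * (((d + n - 1).choose d : ℝ) * s ^ 2) := by
            push_cast
            ring
    exact le_of_mul_le_mul_left harr hpos
  calc Real.sqrt (∑ i : Fin d → Fin n, ‖T i‖ ^ 2)
      ≤ Real.sqrt (((d + n - 1).choose d : ℝ) * s ^ 2) := Real.sqrt_le_sqrt hkey
    _ = Real.sqrt ((d + n - 1).choose d) * s := by
        rw [Real.sqrt_mul (by positivity), Real.sqrt_sq hs0]
end

section
/- For every real homogeneous polynomial f of degree d in n variables, the maximum of |f| over the complex unit sphere is at most 2^(d/2) times the maximum of |f| over the real unit sphere: max_{z∈S(ℂⁿ)}|f(z)| ≤ 2^(d/2)·max_{x∈S(ℝⁿ)}|f(x)|. -/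
open MvPolynomial


lemma aux_homog_eval_mul {R : Type*} [CommSemiring R] {n : ℕ} {F : MvPolynomial (Fin n) R}
    {d : ℕ} (hF : F.IsHomogeneous d) (c : R) (w : Fin n → R) :
    eval (fun i => c * w i) F = c ^ d * eval w F := by
  rw [eval_eq', eval_eq', Finset.mul_sum]
  refine Finset.sum_congr rfl fun m hm => ?_
  have hdeg : ∑ i, m i = d := by
    have h1 := hF (mem_support_iff.mp hm)
    erw [← Finsupp.degree_eq_weight_one] at h1
    rw [← h1, Finsupp.degree]
    exact (Finset.sum_subset (Finset.subset_univ _) fun i _ hi =>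
      Finsupp.notMem_support_iff.mp hi).symm
  simp_rw [mul_pow]
  rw [Finset.prod_mul_distrib, Finset.prod_pow_eq_pow_sum, hdeg]
  ring

lemma aux_eval_aeval {n : ℕ} (F : MvPolynomial (Fin n) ℂ) (g : Fin n → Polynomial ℂ) (t : ℂ) :
    Polynomial.eval t (MvPolynomial.aeval g F) = eval (fun i => (g i).eval t) F := by
  rw [MvPolynomial.aeval_def]
  have h := MvPolynomial.eval₂_comp_left (Polynomial.evalRingHom t)
    (algebraMap ℂ (Polynomial ℂ)) g F
  simp only [Polynomial.coe_evalRingHom] at h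
  rw [h]
  have : (Polynomial.evalRingHom t).comp (algebraMap ℂ (Polynomial ℂ)) = RingHom.id ℂ := by
    ext r; simp
  rw [this]
  rfl

lemma aux_eval_ofReal {n : ℕ} (f : MvPolynomial (Fin n) ℝ) (x : Fin n → ℝ) :
    eval (fun i => (x i : ℂ)) (f.map (algebraMap ℝ ℂ)) = ((eval x f : ℝ) : ℂ) := by
  rw [← MvPolynomial.eval₂_eq_eval_map]
  have h := MvPolynomial.eval₂_comp_left Complex.ofRealHom (RingHom.id ℝ) x f
  simp only [RingHom.comp_id] at h
  have h3 : (algebraMap ℝ ℂ) = Complex.ofRealHom := by ext r; simp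
  have h4 : (fun i => ((x i : ℝ) : ℂ)) = ⇑Complex.ofRealHom ∘ x := rfl
  rw [h3, h4, ← h]
  rfl

lemma aux_continuous_eval {n : ℕ} (f : MvPolynomial (Fin n) ℝ) :
    Continuous fun x : Fin n → ℝ => eval x f := by
  simp only [eval_eq']
  exact continuous_finset_sum _ fun m _ =>
    continuous_const.mul <| continuous_finset_prod _ fun i _ => (continuous_apply i).pow _

lemma aux_key {n d : ℕ} {f : MvPolynomial (Fin n) ℝ} (hf : f.IsHomogeneous d) {M : ℝ}
    (hM : ∀ u : Fin n → ℝ, |eval u f| ≤ M * Real.sqrt (∑ i, u i ^ 2) ^ d)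
    (x y : Fin n → ℝ) (hxy : ∑ i, x i * y i = 0)
    (hlt : ∑ i, y i ^ 2 < ∑ i, x i ^ 2) :
    ‖eval (fun i => (x i : ℂ) + Complex.I * (y i : ℂ)) (f.map (algebraMap ℝ ℂ))‖ ≤
      M * (Real.sqrt (∑ i, x i ^ 2) + Real.sqrt (∑ i, y i ^ 2)) ^ d := by
  have hfc : (f.map (algebraMap ℝ ℂ)).IsHomogeneous d := hf.map _
  set a : ℝ := Real.sqrt (∑ i, x i ^ 2) with ha_def
  set b : ℝ := Real.sqrt (∑ i, y i ^ 2) with hb_def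
  have hxnn : (0:ℝ) ≤ ∑ i, x i ^ 2 := Finset.sum_nonneg fun i _ => sq_nonneg _
  have hynn : (0:ℝ) ≤ ∑ i, y i ^ 2 := Finset.sum_nonneg fun i _ => sq_nonneg _
  have ha2 : a ^ 2 = ∑ i, x i ^ 2 := Real.sq_sqrt hxnn
  have hb2 : b ^ 2 = ∑ i, y i ^ 2 := Real.sq_sqrt hynn
  have ha0 : 0 ≤ a := Real.sqrt_nonneg _
  have hb0 : 0 ≤ b := Real.sqrt_nonneg _
  have hba : b < a := by
    rw [ha_def, hb_def]; exact Real.sqrt_lt_sqrt hynn hlt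
  have hapos : 0 < a := lt_of_le_of_lt hb0 hba
  by_cases hy0 : ∑ i, y i ^ 2 = 0
  · -- y = 0, the point is real
    have hy : ∀ i, y i = 0 := by
      intro i
      have := (Finset.sum_eq_zero_iff_of_nonneg (fun i _ => sq_nonneg (y i))).mp hy0 i
        (Finset.mem_univ i)
      exact pow_eq_zero_iff (two_ne_zero) |>.mp this
    have hb' : b = 0 := by rw [hb_def, hy0, Real.sqrt_zero]
    have hpt : (fun i => (x i : ℂ) + Complex.I * (y i : ℂ)) = fun i => ((x i : ℝ) : ℂ) := by
      funext i; rw [hy i]; simp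
    rw [hpt, aux_eval_ofReal, Complex.norm_real, Real.norm_eq_abs, hb', add_zero]
    exact hM x
  · -- main case : b > 0
    have hbpos : 0 < b := Real.sqrt_pos.mpr (lt_of_le_of_ne hynn (Ne.symm hy0))
    set s : ℝ := Real.sqrt (∑ i, x i ^ 2 - ∑ i, y i ^ 2) with hs_def
    have hs2 : s ^ 2 = a ^ 2 - b ^ 2 := by
      rw [hs_def, Real.sq_sqrt (by linarith), ha2, hb2]
    have hspos : 0 < s := Real.sqrt_pos.mpr (by linarith)
    set r : ℝ := (a - b) / s with hr_def
    have hrpos : 0 < r := div_pos (by linarith) hspos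
    have hr1 : r ≤ 1 := by
      rw [hr_def, div_le_one hspos]
      nlinarith [hs2, hspos.le]
    have hsr : s = r * (a + b) := by
      rw [hr_def]; field_simp; nlinarith [hs2]
    set xt : Fin n → ℝ := fun i => s / a * x i with hxt_def
    set yt : Fin n → ℝ := fun i => s / b * y i with hyt_def
    set g : Fin n → Polynomial ℂ := fun i =>
      Polynomial.C ((xt i : ℂ) / 2) * (Polynomial.X ^ 2 + 1) -
        Polynomial.C (Complex.I * (yt i : ℂ) / 2) * (Polynomial.X ^ 2 - 1) with hg_def
    set Q : Polynomial ℂ := MvPolynomial.aeval g (f.map (algebraMap ℝ ℂ)) with hQ_def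
    have hgeval : ∀ i (t : ℂ), (g i).eval t =
        (xt i : ℂ) * (t ^ 2 + 1) / 2 - Complex.I * (yt i : ℂ) * (t ^ 2 - 1) / 2 := by
      intro i t; simp [hg_def]; ring
    -- boundary bound
    have hbound : ∀ t : ℂ, ‖t‖ = 1 → ‖Q.eval t‖ ≤ M * s ^ d := by
      intro t ht
      have hc : t * (starRingEnd ℂ) t = 1 := by
        rw [Complex.mul_conj]
        norm_cast
        rw [Complex.normSq_eq_norm_sq, ht, one_pow]
      have h2 : t ^ 2 + 1 = t * (2 * t.re) := by
        have h := Complex.add_conj t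
        push_cast at h
        linear_combination t * h - hc
      have h3 : t ^ 2 - 1 = t * (2 * t.im * Complex.I) := by
        have h := Complex.sub_conj t
        push_cast at h
        linear_combination t * h + hc
      set u : Fin n → ℝ := fun i => xt i * t.re + yt i * t.im with hu_def
      have hcoord : ∀ i, (g i).eval t = t * (u i : ℂ) := by
        intro i
        rw [hgeval, h2, h3, hu_def]
        push_cast
        ring_nf
        rw [Complex.I_sq]
        ring
      have hQt : Q.eval t = t ^ d * eval (fun i => ((u i : ℝ) : ℂ)) (f.map (algebraMap ℝ ℂ)) := by
        rw [hQ_def, aux_eval_aeval]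
        have : (fun i => (g i).eval t) = fun i => t * ((u i : ℝ) : ℂ) := funext hcoord
        rw [this, aux_homog_eval_mul hfc]
      have hre2 : t.re ^ 2 + t.im ^ 2 = 1 := by
        have := Complex.sq_norm t
        rw [ht, Complex.normSq_apply] at this
        nlinarith [this]
      have hxt2 : ∑ i, xt i ^ 2 = s ^ 2 := by
        simp only [hxt_def, mul_pow, ← Finset.mul_sum, div_pow]
        rw [← ha2]; field_simp
      have hyt2 : ∑ i, yt i ^ 2 = s ^ 2 := by
        simp only [hyt_def, mul_pow, ← Finset.mul_sum, div_pow]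
        rw [← hb2]; field_simp
      have hxtyt : ∑ i, xt i * yt i = 0 := by
        simp only [hxt_def, hyt_def]
        have : ∀ i, s / a * x i * (s / b * y i) = (s / a * (s / b)) * (x i * y i) := fun i => by
          ring
        rw [Finset.sum_congr rfl fun i _ => this i, ← Finset.mul_sum, hxy, mul_zero]
      have hu2 : ∑ i, u i ^ 2 = s ^ 2 := by
        have hexp : ∀ i, u i ^ 2 =
            xt i ^ 2 * t.re ^ 2 + xt i * yt i * (2 * t.re * t.im) + yt i ^ 2 * t.im ^ 2 :=
          fun i => by rw [hu_def]; ring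
        rw [Finset.sum_congr rfl fun i _ => hexp i, Finset.sum_add_distrib,
          Finset.sum_add_distrib, ← Finset.sum_mul, ← Finset.sum_mul, ← Finset.sum_mul,
          hxt2, hxtyt, hyt2]
        linear_combination (s ^ 2) * hre2
      rw [hQt, norm_mul, norm_pow, ht, one_pow, one_mul, aux_eval_ofReal, Complex.norm_real,
        Real.norm_eq_abs]
      calc |eval u f| ≤ M * Real.sqrt (∑ i, u i ^ 2) ^ d := hM u
        _ = M * s ^ d := by rw [hu2, Real.sqrt_sq hspos.le]
    -- max modulus
    have hQr : ‖Q.eval (r : ℂ)‖ ≤ M * s ^ d := by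
      apply Complex.norm_le_of_forall_mem_frontier_norm_le (U := Metric.ball (0 : ℂ) 1)
        Metric.isBounded_ball (Q.differentiable.diffContOnCl)
      · intro t htf
        rw [frontier_ball (0 : ℂ) one_ne_zero, mem_sphere_zero_iff_norm] at htf
        exact hbound t htf
      · rw [closure_ball (0 : ℂ) one_ne_zero, Metric.mem_closedBall, dist_zero_right,
          Complex.norm_real, Real.norm_eq_abs, abs_of_pos hrpos]
        exact hr1
    -- value at r
    have key1 : s / a * ((r ^ 2 + 1) / 2) = r := by
      rw [hr_def]; field_simp; linear_combination hs2
    have key2 : s / b * ((r ^ 2 - 1) / 2) = -r := by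
      rw [hr_def]; field_simp; linear_combination (-1) * hs2
    have hcoordr : ∀ i, (g i).eval (r : ℂ) = (r : ℂ) * ((x i : ℂ) + Complex.I * (y i : ℂ)) := by
      intro i
      have e1 : xt i * ((r ^ 2 + 1) / 2) = r * x i := by
        simp only [hxt_def]; linear_combination x i * key1
      have e2 : yt i * ((r ^ 2 - 1) / 2) = -r * y i := by
        simp only [hyt_def]; linear_combination y i * key2
      have e1c : ((xt i : ℂ)) * (((r : ℝ) : ℂ) ^ 2 + 1) / 2 = ((r : ℝ) : ℂ) * (x i : ℂ) := by
        have h := congrArg (fun w : ℝ => (w : ℂ)) e1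
        push_cast at h
        linear_combination h
      have e2c : ((yt i : ℂ)) * (((r : ℝ) : ℂ) ^ 2 - 1) / 2 = -((r : ℝ) : ℂ) * (y i : ℂ) := by
        have h := congrArg (fun w : ℝ => (w : ℂ)) e2
        push_cast at h
        linear_combination h
      rw [hgeval]
      linear_combination e1c - Complex.I * e2c
    have hQrval : Q.eval (r : ℂ) =
        (r : ℂ) ^ d * eval (fun i => (x i : ℂ) + Complex.I * (y i : ℂ))
          (f.map (algebraMap ℝ ℂ)) := by
      rw [hQ_def, aux_eval_aeval]
      rw [show (fun i => (g i).eval (r : ℂ)) =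
        fun i => (r : ℂ) * ((x i : ℂ) + Complex.I * (y i : ℂ)) from funext hcoordr]
      exact aux_homog_eval_mul hfc _ _
    rw [hQrval] at hQr
    rw [norm_mul, norm_pow, Complex.norm_real, Real.norm_eq_abs, abs_of_pos hrpos] at hQr
    have hfin : M * s ^ d = r ^ d * (M * (a + b) ^ d) := by
      rw [hsr, mul_pow]; ring
    rw [hfin] at hQr
    exact le_of_mul_le_mul_left hQr (pow_pos hrpos d)

lemma aux_key' {n d : ℕ} {f : MvPolynomial (Fin n) ℝ} (hf : f.IsHomogeneous d) {M : ℝ}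
    (hM : ∀ u : Fin n → ℝ, |eval u f| ≤ M * Real.sqrt (∑ i, u i ^ 2) ^ d)
    (x y : Fin n → ℝ) (hxy : ∑ i, x i * y i = 0)
    (hle : ∑ i, y i ^ 2 ≤ ∑ i, x i ^ 2) (hxpos : 0 < ∑ i, x i ^ 2) :
    ‖eval (fun i => (x i : ℂ) + Complex.I * (y i : ℂ)) (f.map (algebraMap ℝ ℂ))‖ ≤
      M * (Real.sqrt (∑ i, x i ^ 2) + Real.sqrt (∑ i, y i ^ 2)) ^ d := by
  set a : ℝ := Real.sqrt (∑ i, x i ^ 2) with ha_def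
  set b : ℝ := Real.sqrt (∑ i, y i ^ 2) with hb_def
  -- the polynomial representation of the ε-perturbed evaluation
  set g : Fin n → Polynomial ℂ := fun i =>
    (1 + Polynomial.X) * Polynomial.C ((x i : ℂ)) + Polynomial.C (Complex.I * (y i : ℂ))
    with hg_def
  set Q : Polynomial ℂ := MvPolynomial.aeval g (f.map (algebraMap ℝ ℂ)) with hQ_def
  have hQeval : ∀ ε : ℝ, Q.eval ((ε : ℂ)) =
      eval (fun i => (((1 + ε) * x i : ℝ) : ℂ) + Complex.I * (y i : ℂ))
        (f.map (algebraMap ℝ ℂ)) := by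
    intro ε
    rw [hQ_def, aux_eval_aeval]
    have hco : (fun i => Polynomial.eval ((ε : ℂ)) (g i)) =
        fun i => (((1 + ε) * x i : ℝ) : ℂ) + Complex.I * (y i : ℂ) := by
      funext i
      simp only [hg_def, Polynomial.eval_add, Polynomial.eval_mul, Polynomial.eval_one,
        Polynomial.eval_X, Polynomial.eval_C]
      push_cast
      ring
    rw [hco]
  have hcont : Continuous fun ε : ℝ => ‖Q.eval ((ε : ℂ))‖ :=
    (Q.continuous.comp Complex.continuous_ofReal).norm
  have hbound : ∀ ε ∈ Set.Ioi (0 : ℝ), ‖Q.eval ((ε : ℂ))‖ ≤ M * ((1 + ε) * a + b) ^ d := by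
    intro ε hε
    rw [Set.mem_Ioi] at hε
    rw [hQeval]
    have h1 : ∑ i, ((1 + ε) * x i) * y i = 0 := by
      have : ∀ i, ((1 + ε) * x i) * y i = (1 + ε) * (x i * y i) := fun i => by ring
      rw [Finset.sum_congr rfl fun i _ => this i, ← Finset.mul_sum, hxy, mul_zero]
    have h2 : ∑ i, y i ^ 2 < ∑ i, ((1 + ε) * x i) ^ 2 := by
      have : ∀ i, ((1 + ε) * x i) ^ 2 = (1 + ε) ^ 2 * x i ^ 2 := fun i => by ring
      rw [Finset.sum_congr rfl fun i _ => this i, ← Finset.mul_sum]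
      have h1e : 1 < (1 + ε) ^ 2 := by nlinarith
      nlinarith [hxpos, hle]
    have h3 := aux_key hf hM (fun i => (1 + ε) * x i) y h1 h2
    have h4 : Real.sqrt (∑ i, ((1 + ε) * x i) ^ 2) = (1 + ε) * a := by
      have : ∀ i, ((1 + ε) * x i) ^ 2 = (1 + ε) ^ 2 * x i ^ 2 := fun i => by ring
      rw [Finset.sum_congr rfl fun i _ => this i, ← Finset.mul_sum, Real.sqrt_mul (sq_nonneg _),
        Real.sqrt_sq (by linarith)]
    rw [h4] at h3
    exact h3
  have hlim1 : Filter.Tendsto (fun ε : ℝ => ‖Q.eval ((ε : ℂ))‖) (nhdsWithin 0 (Set.Ioi 0))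
      (nhds ‖Q.eval ((0 : ℝ) : ℂ)‖) :=
    (hcont.tendsto 0).mono_left nhdsWithin_le_nhds
  have hlim2 : Filter.Tendsto (fun ε : ℝ => M * ((1 + ε) * a + b) ^ d)
      (nhdsWithin 0 (Set.Ioi 0)) (nhds (M * ((1 + 0) * a + b) ^ d)) := by
    have : Continuous fun ε : ℝ => M * ((1 + ε) * a + b) ^ d := by continuity
    exact (this.tendsto 0).mono_left nhdsWithin_le_nhds
  have hfinal : ‖Q.eval ((0 : ℝ) : ℂ)‖ ≤ M * ((1 + 0) * a + b) ^ d :=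
    le_of_tendsto_of_tendsto hlim1 hlim2
      (Filter.eventually_of_mem self_mem_nhdsWithin hbound)
  have h0 : (fun i => (((1 + (0 : ℝ)) * x i : ℝ) : ℂ) + Complex.I * (y i : ℂ)) =
      fun i => (x i : ℂ) + Complex.I * (y i : ℂ) := by
    funext i; norm_num
  rw [hQeval 0, h0] at hfinal
  rw [show (1 + (0 : ℝ)) * a + b = a + b by ring] at hfinal
  exact hfinal

/-- For a real homogeneous polynomial `f` of degree `d` in `n` variables,
`max_{z∈S(ℂⁿ)}|f(z)| ≤ 2^(d/2)·max_{x∈S(ℝⁿ)}|f(x)|`. -/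
theorem stmt_12 (n d : ℕ) (hn : 1 ≤ n) (f : MvPolynomial (Fin n) ℝ)
    (hf : f.IsHomogeneous d) :
    (⨆ z : Metric.sphere (0 : EuclideanSpace ℂ (Fin n)) 1,
        ‖eval (fun i => (z : EuclideanSpace ℂ (Fin n)) i) (f.map (algebraMap ℝ ℂ))‖) ≤
      (2 : ℝ) ^ ((d : ℝ) / 2) *
        ⨆ x : Metric.sphere (0 : EuclideanSpace ℝ (Fin n)) 1,
          |eval (fun i => (x : EuclideanSpace ℝ (Fin n)) i) f| := by
  have hi0 : Fin n := ⟨0, hn⟩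
  set M : ℝ := ⨆ x : Metric.sphere (0 : EuclideanSpace ℝ (Fin n)) 1,
    |eval (fun i => (x : EuclideanSpace ℝ (Fin n)) i) f| with hM_def
  -- boundedness of the real sup
  have hbddR : BddAbove (Set.range fun x : Metric.sphere (0 : EuclideanSpace ℝ (Fin n)) 1 =>
      |eval (fun i => (x : EuclideanSpace ℝ (Fin n)) i) f|) := by
    have hcont : Continuous fun q : EuclideanSpace ℝ (Fin n) => |eval (fun i => q i) f| := by
      have h1 : Continuous fun q : EuclideanSpace ℝ (Fin n) => (fun i => q i) := by
        exact PiLp.continuous_ofLp 2 (fun _ : Fin n => ℝ)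
      exact ((aux_continuous_eval f).comp h1).abs
    have : (Set.range fun x : Metric.sphere (0 : EuclideanSpace ℝ (Fin n)) 1 =>
        |eval (fun i => (x : EuclideanSpace ℝ (Fin n)) i) f|) =
        (fun q : EuclideanSpace ℝ (Fin n) => |eval (fun i => q i) f|) ''
          Metric.sphere 0 1 := by
      ext r
      constructor
      · rintro ⟨⟨q, hq⟩, rfl⟩; exact ⟨q, hq, rfl⟩
      · rintro ⟨q, hq, rfl⟩; exact ⟨⟨q, hq⟩, rfl⟩
    rw [this]
    exact ((isCompact_sphere (0 : EuclideanSpace ℝ (Fin n)) 1).image hcont).bddAbove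
  -- member bound
  have hub : ∀ w : Fin n → ℝ, ∑ i, w i ^ 2 = 1 → |eval w f| ≤ M := by
    intro w hw
    set W : EuclideanSpace ℝ (Fin n) := (WithLp.equiv 2 (Fin n → ℝ)).symm w with hW_def
    have hwnorm : ‖W‖ = 1 := by
      rw [EuclideanSpace.norm_eq]
      have : ∀ i, ‖W i‖ ^ 2 = w i ^ 2 := fun i => by
        rw [Real.norm_eq_abs, sq_abs]; rfl
      rw [Finset.sum_congr rfl fun i _ => this i, hw, Real.sqrt_one]
    have hmem : W ∈ Metric.sphere (0 : EuclideanSpace ℝ (Fin n)) 1 := by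
      rw [mem_sphere_zero_iff_norm]; exact hwnorm
    exact le_ciSup hbddR (⟨W, hmem⟩ : Metric.sphere (0 : EuclideanSpace ℝ (Fin n)) 1)
  -- unit vector
  set e1 : Fin n → ℝ := fun i => if i = hi0 then 1 else 0 with he1_def
  have he1 : ∑ i, e1 i ^ 2 = 1 := by
    rw [he1_def]
    simp [Finset.sum_ite_eq']
  have hM0 : 0 ≤ M := le_trans (abs_nonneg _) (hub e1 he1)
  -- scaled bound
  have hM : ∀ u : Fin n → ℝ, |eval u f| ≤ M * Real.sqrt (∑ i, u i ^ 2) ^ d := by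
    intro u
    by_cases h0 : ∑ i, u i ^ 2 = 0
    · have hu : ∀ i, u i = 0 := by
        intro i
        have := (Finset.sum_eq_zero_iff_of_nonneg (fun i _ => sq_nonneg (u i))).mp h0 i
          (Finset.mem_univ i)
        exact pow_eq_zero_iff two_ne_zero |>.mp this
      have hueq : u = fun i => (0 : ℝ) * e1 i := funext fun i => by rw [hu i]; ring
      rw [h0, Real.sqrt_zero]
      conv_lhs => rw [hueq]
      rw [aux_homog_eval_mul hf]
      cases d with
      | zero => simpa using hub e1 he1
      | succ d' => simp
    · have hpos : 0 < ∑ i, u i ^ 2 :=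
        lt_of_le_of_ne (Finset.sum_nonneg fun i _ => sq_nonneg _) (Ne.symm h0)
      set t : ℝ := Real.sqrt (∑ i, u i ^ 2) with ht_def
      have htpos : 0 < t := Real.sqrt_pos.mpr hpos
      have ht2 : t ^ 2 = ∑ i, u i ^ 2 := Real.sq_sqrt hpos.le
      have hueq : u = fun i => t * (t⁻¹ * u i) := funext fun i => by
        field_simp
      have hsum : ∑ i, (t⁻¹ * u i) ^ 2 = 1 := by
        have : ∀ i, (t⁻¹ * u i) ^ 2 = t⁻¹ ^ 2 * u i ^ 2 := fun i => by ring
        rw [Finset.sum_congr rfl fun i _ => this i, ← Finset.mul_sum, ← ht2]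
        field_simp
      calc |eval u f| = |t ^ d * eval (fun i => t⁻¹ * u i) f| := by
            conv_lhs => rw [hueq]
            rw [aux_homog_eval_mul hf]
        _ = t ^ d * |eval (fun i => t⁻¹ * u i) f| := by
            rw [abs_mul, abs_pow, abs_of_pos htpos]
        _ ≤ t ^ d * M := by
            exact mul_le_mul_of_nonneg_left (hub _ hsum) (pow_nonneg htpos.le d)
        _ = M * t ^ d := by ring
  -- nonempty complex sphere
  haveI : Nonempty (Metric.sphere (0 : EuclideanSpace ℂ (Fin n)) 1) := by
    refine ⟨⟨EuclideanSpace.single hi0 (1 : ℂ), ?_⟩⟩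
    rw [mem_sphere_zero_iff_norm, EuclideanSpace.norm_single, norm_one]
  apply ciSup_le
  intro z
  have hz1 : ∑ i, ‖((z : EuclideanSpace ℂ (Fin n)) i)‖ ^ 2 = 1 := by
    have hznorm : ‖(z : EuclideanSpace ℂ (Fin n))‖ = 1 := by
      have := z.2
      rwa [mem_sphere_zero_iff_norm] at this
    rw [EuclideanSpace.norm_eq] at hznorm
    have hnn : (0:ℝ) ≤ ∑ i, ‖(z : EuclideanSpace ℂ (Fin n)) i‖ ^ 2 :=
      Finset.sum_nonneg fun i _ => sq_nonneg _
    have := congrArg (fun w : ℝ => w ^ 2) hznorm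
    simp only [Real.sq_sqrt hnn, one_pow] at this
    simpa using this
  set zc : Fin n → ℂ := fun i => (z : EuclideanSpace ℂ (Fin n)) i with hzc_def
  set c : ℂ := ∑ i, zc i ^ 2 with hc_def
  obtain ⟨v, hv2⟩ : ∃ v : ℂ, v ^ 2 = (if c = 0 then 1 else (‖c‖ : ℂ) / c) :=
    IsAlgClosed.exists_pow_nat_eq _ two_pos
  have hvc : v ^ 2 * c = (‖c‖ : ℂ) := by
    by_cases hc0 : c = 0
    · simp [hc0, hv2]
    · rw [hv2, if_neg hc0]; field_simp
  have hvabs : ‖v‖ = 1 := by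
    have h1 : ‖v‖ ^ 2 = 1 := by
      rw [← norm_pow, hv2]
      by_cases hc0 : c = 0
      · simp [hc0]
      · rw [if_neg hc0]
        rw [norm_div, Complex.norm_real, norm_norm, div_self (norm_ne_zero_iff.mpr hc0)]
    have h2 : (‖v‖ - 1) * (‖v‖ + 1) = 0 := by linear_combination h1
    rcases mul_eq_zero.mp h2 with h | h
    · linarith
    · exfalso; linarith [norm_nonneg v]
  set x : Fin n → ℝ := fun i => (v * zc i).re with hx_def
  set y : Fin n → ℝ := fun i => (v * zc i).im with hy_def
  have hsumsq : ∑ i, (v * zc i) ^ 2 = (‖c‖ : ℂ) := by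
    have : ∀ i, (v * zc i) ^ 2 = v ^ 2 * zc i ^ 2 := fun i => by ring
    rw [Finset.sum_congr rfl fun i _ => this i, ← Finset.mul_sum, ← hc_def, hvc]
  have hre : ∑ i, (x i ^ 2 - y i ^ 2) = ‖c‖ := by
    have := congrArg Complex.re hsumsq
    rw [Complex.re_sum] at this
    simpa [hx_def, hy_def, sq, Complex.mul_re] using this
  have him : ∑ i, (2 * (x i * y i)) = 0 := by
    have := congrArg Complex.im hsumsq
    rw [Complex.im_sum] at this
    simp only [Complex.ofReal_im] at this
    calc ∑ i, (2 * (x i * y i)) = ∑ i, ((v * zc i) ^ 2).im := by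
          refine Finset.sum_congr rfl fun i _ => ?_
          rw [sq, Complex.mul_im, hx_def, hy_def]; ring
      _ = 0 := this
  have hxy0 : ∑ i, x i * y i = 0 := by
    have h2 : (2:ℝ) * ∑ i, x i * y i = 0 := by rw [Finset.mul_sum]; exact him
    linarith
  have habs1 : ∑ i, (x i ^ 2 + y i ^ 2) = 1 := by
    have : ∀ i, x i ^ 2 + y i ^ 2 = ‖zc i‖ ^ 2 := by
      intro i
      have h1 : ‖v * zc i‖ ^ 2 = x i ^ 2 + y i ^ 2 := by
        rw [Complex.sq_norm, Complex.normSq_apply, hx_def, hy_def]; ring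
      rw [← h1, norm_mul, hvabs, one_mul]
    rw [Finset.sum_congr rfl fun i _ => this i]
    exact hz1
  have hsx : ∑ i, x i ^ 2 + ∑ i, y i ^ 2 = 1 := by
    rw [← Finset.sum_add_distrib]; exact habs1
  have hdiff : ∑ i, x i ^ 2 - ∑ i, y i ^ 2 = ‖c‖ := by
    rw [← Finset.sum_sub_distrib]; exact hre
  have hle : ∑ i, y i ^ 2 ≤ ∑ i, x i ^ 2 := by
    have := norm_nonneg c; linarith
  have hxpos : 0 < ∑ i, x i ^ 2 := by linarith
  -- apply key lemma
  have hkey := aux_key' hf hM x y hxy0 hle hxpos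
  set a : ℝ := Real.sqrt (∑ i, x i ^ 2) with ha_def
  set b : ℝ := Real.sqrt (∑ i, y i ^ 2) with hb_def
  have hpt : (fun i => (x i : ℂ) + Complex.I * (y i : ℂ)) = fun i => v * zc i := by
    funext i
    rw [hx_def, hy_def, mul_comm Complex.I _]
    exact Complex.re_add_im (v * zc i)
  rw [hpt] at hkey
  have heval : eval (fun i => v * zc i) (f.map (algebraMap ℝ ℂ)) =
      v ^ d * eval zc (f.map (algebraMap ℝ ℂ)) :=
    aux_homog_eval_mul (hf.map _) v zc
  rw [heval, norm_mul, norm_pow, hvabs, one_pow, one_mul] at hkey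
  -- final numeric bound
  have ha2 : a ^ 2 = ∑ i, x i ^ 2 := Real.sq_sqrt (Finset.sum_nonneg fun i _ => sq_nonneg _)
  have hb2 : b ^ 2 = ∑ i, y i ^ 2 := Real.sq_sqrt (Finset.sum_nonneg fun i _ => sq_nonneg _)
  have ha0 : 0 ≤ a := Real.sqrt_nonneg _
  have hb0 : 0 ≤ b := Real.sqrt_nonneg _
  have hab : a + b ≤ Real.sqrt 2 := by
    have h1 : (a + b) ^ 2 ≤ 2 := by nlinarith [sq_nonneg (a - b)]
    calc a + b = Real.sqrt ((a + b) ^ 2) := (Real.sqrt_sq (by linarith)).symm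
      _ ≤ Real.sqrt 2 := Real.sqrt_le_sqrt h1
  have hpow : (a + b) ^ d ≤ (2 : ℝ) ^ ((d : ℝ) / 2) := by
    have h2 : (2 : ℝ) ^ ((d : ℝ) / 2) = Real.sqrt 2 ^ d := by
      rw [Real.sqrt_eq_rpow, ← Real.rpow_natCast ((2:ℝ) ^ ((1:ℝ)/2)) d,
        ← Real.rpow_mul (by norm_num : (0:ℝ) ≤ 2)]
      norm_num
      ring_nf
    rw [h2]
    exact pow_le_pow_left₀ (by linarith) hab d
  calc ‖eval zc (f.map (algebraMap ℝ ℂ))‖ ≤ M * (a + b) ^ d := hkey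
    _ ≤ M * (2 : ℝ) ^ ((d : ℝ) / 2) := mul_le_mul_of_nonneg_left hpow hM0
    _ = (2 : ℝ) ^ ((d : ℝ) / 2) * M := by ring
end

section
/- For every symmetric tensor T in Sym^d(ℝⁿ), ‖T‖_∞ ≥ 2^(-d/2)·C(d+n-1,d)^(-1/2)·‖T‖, where ‖T‖_∞ is the real spectral norm and ‖T‖ the Frobenius norm. -/
/-!
Let `G(x) = ⟨T, x ⊗ ⋯ ⊗ x⟩` and let `Z` be a standard Gaussian vector in `ℝⁿ`. Replacing every
monomial `∏ⱼ xⱼ^mⱼ` of `G` by the Hermite product `∏ⱼ He_mⱼ(xⱼ)` gives a polynomial `H` with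
`𝔼[G H] = 𝔼[H²] = d! ‖T‖²`: Gaussian integration by parts makes `𝔼[P(Z) Heₘ(Z)]` vanish for monic
`P` of lower degree (here `mⱼ < m'ⱼ` for some `j` as soon as two multi-indices differ), and the
symmetry of `T` turns `∑ ∏ⱼ mⱼ!` into `d!` by counting the permutations between two multi-indices.
Hence `d! ‖T‖² ≤ 𝔼[G(Z)²] ≤ ‖T‖²_∞ 𝔼|Z|^{2d}`, and
`𝔼|Z|^{2d} = n (n + 2) ⋯ (n + 2d - 2) ≤ 2^d d! C(d + n - 1, d)`.
-/

open MeasureTheory ProbabilityTheory Polynomial Finset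
open scoped NNReal Nat

lemma hasDerivAt_gaussianPDFReal (x : ℝ) :
    HasDerivAt (gaussianPDFReal 0 1) (-x * gaussianPDFReal 0 1 x) x := by
  have h : HasDerivAt (fun y : ℝ => -y ^ 2 / 2) (-x) x :=
    ((hasDerivAt_pow 2 x).neg.div_const 2).congr_deriv (by ring)
  simp only [gaussianPDFReal_def, NNReal.coe_one, sub_zero, mul_one]
  exact (h.exp.const_mul _).congr_deriv (by ring)

lemma integrable_eval_gaussianReal (P : ℝ[X]) :
    Integrable (fun x => P.eval x) (gaussianReal 0 1) := by
  simp_rw [eval_eq_sum_range]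
  refine integrable_finsetSum _ fun i _ => Integrable.const_mul ?_ _
  have h : MemLp id (i : ℝ≥0) (gaussianReal 0 1) := memLp_id_gaussianReal _
  exact h.integrable_norm_pow'.mono' (by fun_prop) (ae_of_all _ fun x => by simp)

lemma integrable_eval_mul_gaussianPDFReal (P : ℝ[X]) :
    Integrable fun x => P.eval x * gaussianPDFReal 0 1 x := by
  have h := integrable_eval_gaussianReal P
  rw [gaussianReal_of_var_ne_zero 0 one_ne_zero, integrable_withDensity_iff_integrable_smul'
    (measurable_gaussianPDF 0 1) (ae_of_all _ fun _ => ENNReal.ofReal_lt_top)] at h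
  simpa [toReal_gaussianPDF, mul_comm] using h

noncomputable def gaussianExpectation : ℝ[X] →ₗ[ℝ] ℝ where
  toFun P := ∫ x, P.eval x ∂gaussianReal 0 1
  map_add' P Q := by
    simp only [eval_add]
    exact integral_add (integrable_eval_gaussianReal P) (integrable_eval_gaussianReal Q)
  map_smul' c P := by
    simp only [eval_smul, smul_eq_mul, RingHom.id_apply]
    exact integral_const_mul c _

lemma gaussianExpectation_apply (P : ℝ[X]) :
    gaussianExpectation P = ∫ x, P.eval x ∂gaussianReal 0 1 := rfl

lemma gaussianExpectation_one : gaussianExpectation 1 = 1 := by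
  simp [gaussianExpectation_apply]

/-- Stein's identity. -/
lemma gaussianExpectation_X_mul (P : ℝ[X]) :
    gaussianExpectation (X * P) = gaussianExpectation (derivative P) := by
  have hint := integrable_eval_mul_gaussianPDFReal
  have h := integral_mul_deriv_eq_deriv_mul_of_integrable (u := fun x => P.eval x)
    (fun x _ => P.hasDerivAt x) (fun x _ => hasDerivAt_gaussianPDFReal x)
    ((hint (-X * P)).congr (ae_of_all _ fun x => by simp; ring)) (hint _) (hint P)
  simp only [mul_neg, neg_mul, integral_neg, neg_inj] at h
  simp only [gaussianExpectation_apply, integral_gaussianReal_eq_integral_smul one_ne_zero,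
    smul_eq_mul, eval_mul, eval_X]
  convert h using 1 <;> congr 1 with x <;> ring

lemma gaussianExpectation_X_pow_add_two (k : ℕ) :
    gaussianExpectation (X ^ (k + 2)) = (k + 1) * gaussianExpectation (X ^ k) := by
  rw [pow_succ', gaussianExpectation_X_mul, derivative_X_pow, ← smul_eq_C_mul, map_smul]
  push_cast
  rfl

lemma Polynomial.Monic.iterate_derivative_natDegree {R : Type*} [Semiring R] {p : R[X]}
    (hp : p.Monic) : derivative^[p.natDegree] p = C (p.natDegree ! : R) := by
  rw [eq_C_of_natDegree_le_zero ((natDegree_iterate_derivative p _).trans (Nat.sub_self _).le),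
    coeff_iterate_derivative, zero_add, hp.coeff_natDegree, Nat.descFactorial_self, nsmul_one]

noncomputable def hermiteReal (n : ℕ) : ℝ[X] := (hermite n).map (Int.castRingHom ℝ)

lemma hermiteReal_zero : hermiteReal 0 = 1 := by
  simp [hermiteReal]

lemma hermiteReal_succ (n : ℕ) :
    hermiteReal (n + 1) = X * hermiteReal n - derivative (hermiteReal n) := by
  simp [hermiteReal, hermite_succ, derivative_map]

lemma hermiteReal_monic (n : ℕ) : (hermiteReal n).Monic := (hermite_monic n).map _

lemma natDegree_hermiteReal (n : ℕ) : (hermiteReal n).natDegree = n := by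
  rw [hermiteReal, (hermite_monic n).natDegree_map, natDegree_hermite]

lemma gaussianExpectation_mul_hermiteReal_succ (P : ℝ[X]) (b : ℕ) :
    gaussianExpectation (P * hermiteReal (b + 1)) =
      gaussianExpectation (derivative P * hermiteReal b) := by
  rw [hermiteReal_succ, show P * (X * hermiteReal b - derivative (hermiteReal b)) =
      X * (P * hermiteReal b) - P * derivative (hermiteReal b) by ring, map_sub,
    gaussianExpectation_X_mul, derivative_mul, map_add, add_sub_cancel_right]

lemma gaussianExpectation_mul_hermiteReal (P : ℝ[X]) (n : ℕ) :
    gaussianExpectation (P * hermiteReal n) = gaussianExpectation (derivative^[n] P) := by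
  induction n generalizing P with
  | zero => rw [hermiteReal_zero, mul_one, Function.iterate_zero_apply]
  | succ n ih => rw [gaussianExpectation_mul_hermiteReal_succ, ih, Function.iterate_succ_apply]

lemma Polynomial.Monic.gaussianExpectation_mul_hermiteReal {P : ℝ[X]} (hP : P.Monic) {n : ℕ}
    (hn : P.natDegree ≤ n) :
    gaussianExpectation (P * hermiteReal n) = if P.natDegree = n then (n ! : ℝ) else 0 := by
  rw [_root_.gaussianExpectation_mul_hermiteReal]
  split_ifs with h
  · subst h
    rw [hP.iterate_derivative_natDegree, ← mul_one (C _), ← smul_eq_C_mul, map_smul,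
      gaussianExpectation_one, smul_eq_mul, mul_one]
  · rw [iterate_derivative_eq_zero (lt_of_le_of_ne hn h), map_zero]

lemma Finset.exists_lt_of_sum_eq_of_ne {ι : Type*} [Fintype ι] {α β : ι → ℕ}
    (hsum : ∑ j, α j = ∑ j, β j) (hne : α ≠ β) : ∃ j, α j < β j := by
  by_contra! h
  exact hne <| funext fun j =>
    ((sum_eq_sum_iff_of_le fun j _ => h j).1 hsum.symm j (mem_univ j)).symm

lemma prod_gaussianExpectation_mul_hermiteReal {ι : Type*} [Fintype ι] {P : ℕ → ℝ[X]}
    (hP : ∀ a, (P a).Monic) (hdeg : ∀ a, (P a).natDegree = a) {α β : ι → ℕ}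
    (hsum : ∑ j, α j = ∑ j, β j) :
    ∏ j, gaussianExpectation (P (α j) * hermiteReal (β j)) =
      if α = β then ∏ j, ((α j)! : ℝ) else 0 := by
  split_ifs with h
  · subst h
    refine prod_congr rfl fun j _ => ?_
    rw [(hP _).gaussianExpectation_mul_hermiteReal (hdeg _).le, if_pos (hdeg _)]
  · obtain ⟨j, hj⟩ := exists_lt_of_sum_eq_of_ne hsum h
    refine prod_eq_zero (mem_univ j) ?_
    rw [(hP _).gaussianExpectation_mul_hermiteReal (hdeg _ ▸ hj.le), if_neg (hdeg _ ▸ hj.ne)]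

section Multiplicity

variable {κ ι : Type*} [Fintype κ] [DecidableEq ι]

def fiberCard (i : κ → ι) (j : ι) : ℕ := #{k | i k = j}

lemma sum_fiberCard [Fintype ι] (i : κ → ι) : ∑ j, fiberCard i j = Fintype.card κ :=
  (card_eq_sum_card_fiberwise fun k _ => mem_univ (i k)).symm

lemma prod_comp_eq_prod_pow_fiberCard [Fintype ι] {M : Type*} [CommMonoid M] (i : κ → ι)
    (y : ι → M) : ∏ k, y (i k) = ∏ j, y j ^ fiberCard i j := by
  rw [← prod_fiberwise univ i fun k => y (i k)]
  refine prod_congr rfl fun j _ => ?_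
  rw [prod_congr rfl fun k hk => by rw [(mem_filter.1 hk).2], prod_const]
  rfl

lemma fiberCard_comp_perm (i : κ → ι) (σ : Equiv.Perm κ) : fiberCard (i ∘ σ) = fiberCard i := by
  ext j
  simp only [fiberCard, ← Fintype.card_subtype]
  exact Fintype.card_congr (σ.subtypeEquiv fun _ => Iff.rfl)

lemma card_perm_comp_eq [DecidableEq κ] [Fintype ι] (i i' : κ → ι) :
    Fintype.card {σ : Equiv.Perm κ // i ∘ σ = i'} =
      if fiberCard i = fiberCard i' then ∏ j, (fiberCard i j)! else 0 := by
  split_ifs with h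
  · have hcard (j : ι) : Fintype.card {k // i' k = j} = Fintype.card {k // i k = j} := by
      simp only [Fintype.card_subtype]; exact (congrFun h j).symm
    let σ₀ : Equiv.Perm κ :=
      Equiv.ofFiberEquiv (f := i') (g := i) fun j => Fintype.equivOfCardEq (hcard j)
    have hσ₀ : i ∘ σ₀ = i' := funext (Equiv.ofFiberEquiv_map _)
    have e : {σ : Equiv.Perm κ // i ∘ σ = i'} ≃ {τ : Equiv.Perm κ // i ∘ τ = i} :=
      (Equiv.mulRight σ₀⁻¹).subtypeEquiv fun σ => by
        rw [Equiv.coe_mulRight, Equiv.Perm.coe_mul, ← Function.comp_assoc, Equiv.Perm.inv_def,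
          Equiv.comp_symm_eq, hσ₀]
    rw [Fintype.card_congr e, DomMulAct.stabilizer_card]
    simp only [fiberCard, Fintype.card_subtype]
  · rw [Fintype.card_eq_zero_iff]
    exact ⟨fun ⟨σ, hσ⟩ => h (hσ ▸ fiberCard_comp_perm i σ).symm⟩

lemma sum_mul_card_perm_comp_eq [DecidableEq κ] [Fintype ι] {T : (κ → ι) → ℝ}
    (hT : ∀ (σ : Equiv.Perm κ) i, T (i ∘ σ) = T i) (i : κ → ι) :
    ∑ i', T i' * Fintype.card {σ : Equiv.Perm κ // i ∘ σ = i'} = (Fintype.card κ)! * T i := by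
  calc ∑ i', T i' * Fintype.card {σ : Equiv.Perm κ // i ∘ σ = i'}
      = ∑ i', ∑ σ ∈ univ.filter (fun σ : Equiv.Perm κ => i ∘ σ = i'), T (i ∘ σ) := by
        refine sum_congr rfl fun i' _ => ?_
        rw [Fintype.card_subtype, sum_congr rfl fun σ hσ => by rw [(mem_filter.1 hσ).2],
          sum_const, nsmul_eq_mul, mul_comm]
    _ = ∑ σ : Equiv.Perm κ, T (i ∘ σ) := sum_fiberwise _ _ _
    _ = (Fintype.card κ)! * T i := by simp [hT, Fintype.card_perm]

lemma sum_sum_mul_ite_fiberCard_eq [DecidableEq κ] [Fintype ι] {T : (κ → ι) → ℝ}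
    (hT : ∀ (σ : Equiv.Perm κ) i, T (i ∘ σ) = T i) :
    ∑ i, ∑ i', T i * T i' *
        (if fiberCard i = fiberCard i' then ∏ j, ((fiberCard i j)! : ℝ) else 0) =
      (Fintype.card κ)! * ∑ i, T i ^ 2 := by
  have hcard (i i' : κ → ι) : (if fiberCard i = fiberCard i' then ∏ j, ((fiberCard i j)! : ℝ)
      else 0) = Fintype.card {σ : Equiv.Perm κ // i ∘ σ = i'} := by
    rw [card_perm_comp_eq]; push_cast; rfl
  simp_rw [hcard, mul_assoc, ← mul_sum, sum_mul_card_perm_comp_eq hT, mul_sum]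
  exact sum_congr rfl fun i _ => by ring

end Multiplicity

lemma two_mul_integral_mul_sub_integral_mul_self_le {α : Type*} [MeasurableSpace α]
    {μ : Measure α} {f g : α → ℝ} (hff : Integrable (fun x => f x * f x) μ)
    (hfg : Integrable (fun x => f x * g x) μ) (hgg : Integrable (fun x => g x * g x) μ) :
    2 * ∫ x, f x * g x ∂μ - ∫ x, g x * g x ∂μ ≤ ∫ x, f x * f x ∂μ := by
  have h := integral_nonneg (μ := μ) (f := fun x => (f x - g x) ^ 2) fun x => sq_nonneg _
  have e : ∫ x, (f x - g x) ^ 2 ∂μ =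
      ∫ x, f x * f x ∂μ - 2 * ∫ x, f x * g x ∂μ + ∫ x, g x * g x ∂μ := by
    rw [← integral_const_mul, ← integral_sub hff (hfg.const_mul 2),
      ← integral_add (f := fun x => f x * f x - 2 * (f x * g x)) (hff.sub (hfg.const_mul 2)) hgg]
    exact integral_congr_ae (ae_of_all _ fun x => by ring)
  linarith

section GaussianProduct

variable {ι : Type*} [Fintype ι]

noncomputable abbrev stdGaussianPi (ι : Type*) [Fintype ι] : Measure (ι → ℝ) :=
  Measure.pi fun _ : ι => gaussianReal 0 1

lemma integrable_sum_mul_prod_eval {α : Type*} [Fintype α] (c : α → ℝ) (R : α → ι → ℝ[X]) :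
    Integrable (fun x => ∑ a, c a * ∏ j, (R a j).eval (x j)) (stdGaussianPi ι) :=
  integrable_finsetSum _ fun a _ =>
    (Integrable.fintype_prod fun j => integrable_eval_gaussianReal (R a j)).const_mul (c a)

lemma integral_sum_mul_prod_eval {α : Type*} [Fintype α] (c : α → ℝ) (R : α → ι → ℝ[X]) :
    ∫ x, ∑ a, c a * ∏ j, (R a j).eval (x j) ∂stdGaussianPi ι =
      ∑ a, c a * ∏ j, gaussianExpectation (R a j) := by
  rw [integral_finsetSum _ fun a _ => ?_]
  · refine sum_congr rfl fun a _ => ?_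
    rw [integral_const_mul, integral_fintype_prod_eq_prod (fun j t => (R a j).eval t)]
    rfl
  · exact (Integrable.fintype_prod fun j => integrable_eval_gaussianReal (R a j)).const_mul (c a)

variable {κ : Type*} [Fintype κ] [DecidableEq κ] [DecidableEq ι]

/-- `∑ᵢ Tᵢ ∏ⱼ P_{mⱼ(i)}(xⱼ)` with `mⱼ(i) = fiberCard i j`: for `P = (X ^ ·)` this is
`⟨T, x ⊗ ⋯ ⊗ x⟩`, for `P = hermiteReal` its Hermite counterpart. -/
noncomputable def tensorEval (T : (κ → ι) → ℝ) (P : ℕ → ℝ[X]) (x : ι → ℝ) : ℝ :=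
  ∑ i, T i * ∏ j, (P (fiberCard i j)).eval (x j)

lemma tensorEval_mul_tensorEval (T : (κ → ι) → ℝ) (P Q : ℕ → ℝ[X]) (x : ι → ℝ) :
    tensorEval T P x * tensorEval T Q x = ∑ p : (κ → ι) × (κ → ι),
      T p.1 * T p.2 * ∏ j, (P (fiberCard p.1 j) * Q (fiberCard p.2 j)).eval (x j) := by
  rw [Fintype.sum_prod_type]
  simp only [tensorEval, sum_mul_sum, eval_mul, prod_mul_distrib]
  exact sum_congr rfl fun i _ => sum_congr rfl fun i' _ => by ring

lemma integrable_tensorEval_mul_tensorEval (T : (κ → ι) → ℝ) (P Q : ℕ → ℝ[X]) :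
    Integrable (fun x => tensorEval T P x * tensorEval T Q x) (stdGaussianPi ι) := by
  simp_rw [tensorEval_mul_tensorEval]
  exact integrable_sum_mul_prod_eval _ _

lemma integral_tensorEval_mul_tensorEval_hermiteReal {T : (κ → ι) → ℝ}
    (hT : ∀ (σ : Equiv.Perm κ) i, T (i ∘ σ) = T i) {P : ℕ → ℝ[X]} (hP : ∀ a, (P a).Monic)
    (hdeg : ∀ a, (P a).natDegree = a) :
    ∫ x, tensorEval T P x * tensorEval T hermiteReal x ∂stdGaussianPi ι =
      (Fintype.card κ)! * ∑ i, T i ^ 2 := by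
  simp_rw [tensorEval_mul_tensorEval]
  rw [integral_sum_mul_prod_eval, Fintype.sum_prod_type]
  have hprod (i i' : κ → ι) := prod_gaussianExpectation_mul_hermiteReal hP hdeg
    ((sum_fiberCard i).trans (sum_fiberCard i').symm)
  simp_rw [hprod]
  exact sum_sum_mul_ite_fiberCard_eq hT

lemma factorial_mul_sum_sq_le_integral_tensorEval_sq {T : (κ → ι) → ℝ}
    (hT : ∀ (σ : Equiv.Perm κ) i, T (i ∘ σ) = T i) :
    (Fintype.card κ)! * ∑ i, T i ^ 2 ≤
      ∫ x, tensorEval T (X ^ ·) x ^ 2 ∂stdGaussianPi ι := by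
  have h := two_mul_integral_mul_sub_integral_mul_self_le
    (integrable_tensorEval_mul_tensorEval T (X ^ ·) (X ^ ·))
    (integrable_tensorEval_mul_tensorEval T (X ^ ·) hermiteReal)
    (integrable_tensorEval_mul_tensorEval T hermiteReal hermiteReal)
  rw [integral_tensorEval_mul_tensorEval_hermiteReal hT (monic_X_pow ·) natDegree_X_pow,
    integral_tensorEval_mul_tensorEval_hermiteReal hT hermiteReal_monic natDegree_hermiteReal] at h
  calc (Fintype.card κ)! * ∑ i, T i ^ 2 = 2 * ((Fintype.card κ)! * ∑ i, T i ^ 2) -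
        (Fintype.card κ)! * ∑ i, T i ^ 2 := by ring
    _ ≤ _ := h
    _ = _ := by simp only [sq]

end GaussianProduct

section Moments

variable {ι : Type*} [DecidableEq ι]

lemma fiberCard_cons {d : ℕ} (a : ι) (ψ : Fin d → ι) (j : ι) :
    fiberCard (Fin.cons a ψ : Fin (d + 1) → ι) j = fiberCard ψ j + if a = j then 1 else 0 := by
  simp only [fiberCard, card_filter, Fin.sum_univ_succ, Fin.cons_zero, Fin.cons_succ]
  ring

lemma gaussianExpectation_X_pow_two_mul_add_ite (c : ℕ) (p : Prop) [Decidable p] :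
    gaussianExpectation (X ^ (2 * (c + if p then 1 else 0))) =
      (if p then (2 * c + 1 : ℝ) else 1) * gaussianExpectation (X ^ (2 * c)) := by
  split_ifs
  · rw [mul_add, mul_one, gaussianExpectation_X_pow_add_two]
    push_cast
    ring
  · rw [add_zero, one_mul]

lemma prod_gaussianExpectation_X_pow_fiberCard_cons [Fintype ι] {d : ℕ} (a : ι) (ψ : Fin d → ι) :
    ∏ j, gaussianExpectation (X ^ (2 * fiberCard (Fin.cons a ψ : Fin (d + 1) → ι) j)) =
      (2 * fiberCard ψ a + 1) * ∏ j, gaussianExpectation (X ^ (2 * fiberCard ψ j)) := by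
  simp_rw [fiberCard_cons, gaussianExpectation_X_pow_two_mul_add_ite, prod_mul_distrib,
    Fintype.prod_ite_eq]

lemma sum_prod_gaussianExpectation_X_pow_fiberCard [Fintype ι] (d : ℕ) :
    ∑ i : Fin d → ι, ∏ j, gaussianExpectation (X ^ (2 * fiberCard i j)) =
      ∏ k ∈ range d, (Fintype.card ι + 2 * k : ℝ) := by
  induction d with
  | zero =>
    have h (i : Fin 0 → ι) (j : ι) : fiberCard i j = 0 := by simp [fiberCard]
    simp [h, gaussianExpectation_one]
  | succ d ih =>
    rw [← (Fin.consEquiv fun _ => ι).sum_comp, Fintype.sum_prod_type, Finset.sum_comm]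
    have hcons (a : ι) (ψ : Fin d → ι) : (Fin.consEquiv fun _ => ι) (a, ψ) = Fin.cons a ψ := rfl
    have hsum (ψ : Fin d → ι) :
        ∑ a, (2 * (fiberCard ψ a : ℝ) + 1) = Fintype.card ι + 2 * d := by
      rw [sum_add_distrib, ← mul_sum, ← Nat.cast_sum, sum_fiberCard, Fintype.card_fin]
      simp [add_comm]
    simp only [hcons, prod_gaussianExpectation_X_pow_fiberCard_cons, ← sum_mul, hsum]
    rw [← mul_sum, ih, prod_range_succ, mul_comm]

lemma sum_sq_pow_eq_sum_prod_eval [Fintype ι] (d : ℕ) (x : ι → ℝ) :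
    (∑ j, x j ^ 2) ^ d = ∑ i : Fin d → ι, 1 * ∏ j, (X ^ (2 * fiberCard i j)).eval (x j) := by
  rw [← Fin.prod_const d, Finset.prod_univ_sum, Fintype.piFinset_univ]
  refine sum_congr rfl fun i _ => ?_
  simp only [one_mul, eval_pow, eval_X, pow_mul]
  exact prod_comp_eq_prod_pow_fiberCard i fun j => x j ^ 2

lemma integral_sum_sq_pow [Fintype ι] (d : ℕ) :
    ∫ x, (∑ j, x j ^ 2) ^ d ∂stdGaussianPi ι = ∏ k ∈ range d, (Fintype.card ι + 2 * k : ℝ) := by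
  simp_rw [sum_sq_pow_eq_sum_prod_eval d, integral_sum_mul_prod_eval, one_mul]
  exact sum_prod_gaussianExpectation_X_pow_fiberCard d

lemma integrable_sum_sq_pow [Fintype ι] (d : ℕ) :
    Integrable (fun x => (∑ j, x j ^ 2) ^ d) (stdGaussianPi ι) := by
  simp_rw [sum_sq_pow_eq_sum_prod_eval d]
  exact integrable_sum_mul_prod_eval _ _

end Moments

lemma abs_le_iSup_sphere_mul_norm_pow {E : Type*} [NormedAddCommGroup E] [NormedSpace ℝ E]
    [ProperSpace E] [Nontrivial E] {f : E → ℝ} {d : ℕ} (hf : Continuous f)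
    (hhom : ∀ (c : ℝ) (x : E), f (c • x) = c ^ d * f x) (x : E) :
    |f x| ≤ (⨆ y : Metric.sphere (0 : E) 1, |f y|) * ‖x‖ ^ d := by
  have hbdd : BddAbove (Set.range fun y : Metric.sphere (0 : E) 1 => |f y|) :=
    (isCompact_range (by fun_prop)).bddAbove
  obtain ⟨u, hu, hxu⟩ : ∃ u ∈ Metric.sphere (0 : E) 1, x = ‖x‖ • u := by
    by_cases hx : x = 0
    · obtain ⟨u, hu⟩ := (NormedSpace.sphere_nonempty (x := (0 : E))).2 zero_le_one
      exact ⟨u, hu, by simp [hx]⟩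
    · refine ⟨‖x‖⁻¹ • x, by simp [norm_smul, hx], ?_⟩
      rw [smul_smul, mul_inv_cancel₀ (norm_ne_zero_iff.2 hx), one_smul]
  calc |f x| = ‖x‖ ^ d * |f u| := by
        conv_lhs => rw [hxu, hhom]
        rw [abs_mul, abs_pow, abs_norm]
    _ ≤ ‖x‖ ^ d * ⨆ y : Metric.sphere (0 : E) 1, |f y| :=
        mul_le_mul_of_nonneg_left (le_ciSup hbdd ⟨u, hu⟩) (by positivity)
    _ = _ := mul_comm _ _

lemma tensorEval_X_pow_sq_le {κ ι : Type*} [Fintype κ] [DecidableEq κ] [Fintype ι] [DecidableEq ι]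
    [Nonempty ι] (T : (κ → ι) → ℝ) (x : ι → ℝ) :
    tensorEval T (X ^ ·) x ^ 2 ≤
      (⨆ y : Metric.sphere (0 : EuclideanSpace ℝ ι) 1,
        |∑ i, T i * ∏ k, (y : EuclideanSpace ℝ ι) (i k)|) ^ 2 *
        (∑ j, x j ^ 2) ^ Fintype.card κ := by
  set f : EuclideanSpace ℝ ι → ℝ := fun y => ∑ i, T i * ∏ k, y (i k)
  have hcont : Continuous f :=
    continuous_finsetSum _ fun i _ =>
      continuous_const.mul (continuous_finsetProd _ fun k _ => by fun_prop)
  have hhom (c : ℝ) (y : EuclideanSpace ℝ ι) : f (c • y) = c ^ Fintype.card κ * f y := by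
    simp only [f, PiLp.smul_apply, smul_eq_mul, prod_mul_distrib, prod_const, card_univ, mul_sum]
    exact sum_congr rfl fun i _ => by ring
  have hx : tensorEval T (X ^ ·) x = f (WithLp.toLp 2 x) := by
    simp only [tensorEval, f, eval_pow, eval_X, prod_comp_eq_prod_pow_fiberCard]
  have hnorm : ‖WithLp.toLp 2 x‖ ^ 2 = ∑ j, x j ^ 2 := by
    simp [EuclideanSpace.norm_sq_eq]
  rw [hx, ← sq_abs, ← hnorm, ← pow_mul, mul_comm 2, pow_mul, ← mul_pow]
  exact pow_le_pow_left₀ (abs_nonneg _) (abs_le_iSup_sphere_mul_norm_pow hcont hhom _) 2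

lemma prod_range_add_two_mul_le (n d : ℕ) :
    ∏ k ∈ range d, (n + 2 * k : ℝ) ≤ 2 ^ d * d ! * (d + n - 1).choose d := by
  calc ∏ k ∈ range d, (n + 2 * k : ℝ) ≤ ∏ k ∈ range d, 2 * (n + k : ℝ) :=
        prod_le_prod (fun k _ => by positivity) fun k _ => by
          linarith [(n.cast_nonneg : (0 : ℝ) ≤ n)]
    _ = 2 ^ d * (n.ascFactorial d : ℝ) := by
        rw [prod_mul_distrib, prod_const, card_range, Nat.ascFactorial_eq_prod_range]
        push_cast
        rfl
    _ = 2 ^ d * d ! * (d + n - 1).choose d := by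
        rw [Nat.ascFactorial_eq_factorial_mul_choose', add_comm n d]
        push_cast
        ring

lemma sum_sq_le_of_comp_perm {κ ι : Type*} [Fintype κ] [DecidableEq κ] [Fintype ι] [DecidableEq ι]
    [Nonempty ι] {T : (κ → ι) → ℝ} (hT : ∀ (σ : Equiv.Perm κ) i, T (i ∘ σ) = T i) :
    ∑ i, T i ^ 2 ≤ 2 ^ Fintype.card κ *
      (Fintype.card κ + Fintype.card ι - 1).choose (Fintype.card κ) *
      (⨆ y : Metric.sphere (0 : EuclideanSpace ℝ ι) 1,
        |∑ i, T i * ∏ k, (y : EuclideanSpace ℝ ι) (i k)|) ^ 2 := by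
  set S := ⨆ y : Metric.sphere (0 : EuclideanSpace ℝ ι) 1,
    |∑ i, T i * ∏ k, (y : EuclideanSpace ℝ ι) (i k)|
  set d := Fintype.card κ
  refine le_of_mul_le_mul_left ?_ (Nat.cast_pos.2 d.factorial_pos : (0 : ℝ) < d !)
  calc (d ! : ℝ) * ∑ i, T i ^ 2 ≤ ∫ x, tensorEval T (X ^ ·) x ^ 2 ∂stdGaussianPi ι :=
        factorial_mul_sum_sq_le_integral_tensorEval_sq hT
    _ ≤ ∫ x, S ^ 2 * (∑ j, x j ^ 2) ^ d ∂stdGaussianPi ι :=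
        integral_mono
          (by simpa only [sq] using integrable_tensorEval_mul_tensorEval T (X ^ ·) (X ^ ·))
          ((integrable_sum_sq_pow d).const_mul _) (tensorEval_X_pow_sq_le T)
    _ = S ^ 2 * ∏ k ∈ range d, (Fintype.card ι + 2 * k : ℝ) := by
        rw [integral_const_mul, integral_sum_sq_pow]
    _ ≤ S ^ 2 * (2 ^ d * d ! * (d + Fintype.card ι - 1).choose d) :=
        mul_le_mul_of_nonneg_left (prod_range_add_two_mul_le _ d) (sq_nonneg S)
    _ = d ! * (2 ^ d * (d + Fintype.card ι - 1).choose d * S ^ 2) := by ring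

/-- Every symmetric tensor `T ∈ Sym^d(ℝⁿ)` satisfies
`‖T‖_∞ ≥ 2^(-d/2)·C(d+n-1,d)^(-1/2)·‖T‖`, where `‖T‖_∞ = max_{x∈S^(n-1)}|⟨T,x⊗⋯⊗x⟩|` and
`‖T‖` is the Frobenius norm; equivalently `‖T‖ ≤ 2^(d/2)·√C(d+n-1,d)·‖T‖_∞`. -/
theorem stmt_13 (n d : ℕ) (hn : 1 ≤ n) (T : (Fin d → Fin n) → ℝ)
    (hsymm : ∀ (σ : Equiv.Perm (Fin d)) (i : Fin d → Fin n), T (i ∘ σ) = T i) :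
    Real.sqrt (∑ i : Fin d → Fin n, T i ^ 2) ≤
      (2 : ℝ) ^ ((d : ℝ) / 2) * Real.sqrt ((d + n - 1).choose d) *
        ⨆ x : Metric.sphere (0 : EuclideanSpace ℝ (Fin n)) 1,
          |∑ i : Fin d → Fin n, T i * ∏ k, (x : EuclideanSpace ℝ (Fin n)) (i k)| := by
  have : Nonempty (Fin n) := ⟨⟨0, hn⟩⟩
  have hS : 0 ≤ ⨆ x : Metric.sphere (0 : EuclideanSpace ℝ (Fin n)) 1,
      |∑ i : Fin d → Fin n, T i * ∏ k, (x : EuclideanSpace ℝ (Fin n)) (i k)| :=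
    Real.iSup_nonneg fun _ => abs_nonneg _
  have h := sum_sq_le_of_comp_perm hsymm
  simp only [Fintype.card_fin] at h
  have h2 : (2 : ℝ) ^ ((d : ℝ) / 2) = √(2 ^ d) := by
    rw [Real.sqrt_eq_rpow, ← Real.rpow_natCast, ← Real.rpow_mul zero_le_two, div_eq_mul_one_div]
  rw [h2, ← Real.sqrt_sq hS, ← Real.sqrt_mul (by positivity), ← Real.sqrt_mul (by positivity)]
  exact Real.sqrt_le_sqrt h
end

section
/- For every tensor T ∈ ℝ^{n₁}⊗···⊗ℝ^{n_d}, the spectral norm satisfies ‖T‖_∞ ≥ ‖T‖ / sqrt(min_i Π_{j≠i} n_j), where ‖T‖ is the Frobenius norm. -/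
lemma coord_le_norm' {m : ℕ} (x : EuclideanSpace ℝ (Fin m)) (l : Fin m) : |x l| ≤ ‖x‖ := by
  rw [EuclideanSpace.norm_eq]
  rw [show |x l| = Real.sqrt (|x l|^2) from (Real.sqrt_sq (abs_nonneg _)).symm]
  apply Real.sqrt_le_sqrt
  simpa using Finset.single_le_sum (f := fun i => ‖x i‖^2) (fun i _ => sq_nonneg _) (Finset.mem_univ l)

/-- Every tensor `T ∈ ℝ^{n₁}⊗⋯⊗ℝ^{n_d}` satisfies
`‖T‖_∞ ≥ ‖T‖/√(min_i Π_{j≠i} n_j)`, where `‖T‖` is the Frobenius norm and `‖T‖_∞` the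
spectral norm; equivalently `‖T‖ ≤ √(min_i Π_{j≠i} n_j) · ‖T‖_∞`. -/
theorem stmt_14 (d : ℕ) (hd : 1 ≤ d) (n : Fin d → ℕ) (hn : ∀ j, 1 ≤ n j)
    (T : (∀ j : Fin d, Fin (n j)) → ℝ) :
    Real.sqrt (∑ i : ∀ j : Fin d, Fin (n j), T i ^ 2) ≤
      Real.sqrt (Finset.univ.inf' (Finset.univ_nonempty_iff.mpr (Fin.pos_iff_nonempty.mp hd)) fun i : Fin d =>
          ∏ j ∈ Finset.univ.erase i, n j) *
        ⨆ x : ∀ j : Fin d, Metric.sphere (0 : EuclideanSpace ℝ (Fin (n j))) 1,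
          |∑ i : ∀ j : Fin d, Fin (n j),
            T i * ∏ j, ((x j : EuclideanSpace ℝ (Fin (n j))) (i j))| := by
  classical
  set f : (∀ j : Fin d, Metric.sphere (0 : EuclideanSpace ℝ (Fin (n j))) 1) → ℝ :=
    fun x => |∑ i : ∀ j : Fin d, Fin (n j),
      T i * ∏ j, ((x j : EuclideanSpace ℝ (Fin (n j))) (i j))| with hf
  haveI hne : ∀ j : Fin d, Nonempty (Metric.sphere (0 : EuclideanSpace ℝ (Fin (n j))) 1) := by
    intro j
    exact ⟨⟨EuclideanSpace.single ⟨0, hn j⟩ (1:ℝ), by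
      simp [mem_sphere_zero_iff_norm, EuclideanSpace.norm_single]⟩⟩
  haveI : Nonempty (∀ j : Fin d, Metric.sphere (0 : EuclideanSpace ℝ (Fin (n j))) 1) :=
    ⟨fun j => (hne j).some⟩
  have hxnorm : ∀ (x : ∀ j : Fin d, Metric.sphere (0 : EuclideanSpace ℝ (Fin (n j))) 1) (j : Fin d),
      ‖(x j : EuclideanSpace ℝ (Fin (n j)))‖ = 1 := by
    intro x j
    simpa [mem_sphere_zero_iff_norm] using (x j).2
  have hbdd : BddAbove (Set.range f) := by
    refine ⟨∑ i, |T i|, ?_⟩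
    rintro _ ⟨x, rfl⟩
    calc f x ≤ ∑ i, |T i * ∏ j, ((x j : EuclideanSpace ℝ (Fin (n j))) (i j))| :=
          Finset.abs_sum_le_sum_abs _ _
      _ ≤ ∑ i, |T i| := by
          apply Finset.sum_le_sum; intro i _
          rw [abs_mul]
          have h1 : |∏ j, ((x j : EuclideanSpace ℝ (Fin (n j))) (i j))| ≤ 1 := by
            rw [Finset.abs_prod]
            apply Finset.prod_le_one (fun j _ => abs_nonneg _)
            intro j _
            have h2 := coord_le_norm' (x j : EuclideanSpace ℝ (Fin (n j))) (i j)
            rw [hxnorm x j] at h2; exact h2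
          nlinarith [abs_nonneg (T i)]
  set S := ⨆ x, f x with hS
  have hS0 : 0 ≤ S :=
    le_trans (abs_nonneg _) (le_ciSup hbdd (Classical.arbitrary _))
  have hfS : ∀ x, f x ≤ S := fun x => le_ciSup hbdd x
  obtain ⟨i₀, -, hi₀⟩ := Finset.exists_mem_eq_inf'
    (Finset.univ_nonempty_iff.mpr (Fin.pos_iff_nonempty.mp hd))
    (fun i : Fin d => ∏ j ∈ Finset.univ.erase i, (n j : ℝ))
  rw [hi₀]
  have hfst : ∀ (a : Fin (n i₀)) (kk : ∀ j : { j : Fin d // j ≠ i₀ }, Fin (n j.1)),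
      ((Equiv.piSplitAt i₀ fun j => Fin (n j)).symm (a, kk)) i₀ = a := by
    intro a kk; simp
  have hsnd : ∀ (a : Fin (n i₀)) (kk : ∀ j : { j : Fin d // j ≠ i₀ }, Fin (n j.1))
      (j : Fin d) (h : j ≠ i₀),
      ((Equiv.piSplitAt i₀ fun j => Fin (n j)).symm (a, kk)) j = kk ⟨j, h⟩ := by
    intro a kk j h; simp [h]
  have hcard : ((Fintype.card (∀ j : { j : Fin d // j ≠ i₀ }, Fin (n j.1)) : ℕ) : ℝ)
      = ∏ j ∈ Finset.univ.erase i₀, (n j : ℝ) := by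
    rw [Fintype.card_pi]
    simp only [Fintype.card_fin]
    rw [show (∏ j ∈ Finset.univ.erase i₀, (n j : ℝ))
        = ((∏ j ∈ Finset.univ.erase i₀, n j : ℕ) : ℝ) by push_cast; ring]
    rw [Finset.prod_subtype (p := fun j => j ≠ i₀) (Finset.univ.erase i₀)
      (fun x => by simp [Finset.mem_erase]) (fun j => n j)]
  set K := ∀ j : { j : Fin d // j ≠ i₀ }, Fin (n j.1) with hK
  set e := Equiv.piSplitAt i₀ (fun j => Fin (n j)) with he
  set v : K → Fin (n i₀) → ℝ := fun k a => T (e.symm (a, k)) with hv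
  -- key claim
  have key : ∀ k : K, ∑ a, (v k a)^2 ≤ S^2 := by
    intro k
    set u : EuclideanSpace ℝ (Fin (n i₀)) := (WithLp.equiv 2 _).symm (v k) with hu
    have hNsq : ‖u‖^2 = ∑ a, (v k a)^2 := by
      rw [EuclideanSpace.norm_eq, Real.sq_sqrt (Finset.sum_nonneg fun a _ => sq_nonneg _)]
      simp [hu, sq_abs]
    by_cases hN : ‖u‖ = 0
    · rw [← hNsq, hN]; simpa using sq_nonneg S
    · set N := ‖u‖ with hNdef
      set w : EuclideanSpace ℝ (Fin (n i₀)) := N⁻¹ • u with hw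
      have hwn : ‖w‖ = 1 := by
        rw [hw, norm_smul, norm_inv, norm_norm, ← hNdef, inv_mul_cancel₀ hN]
      set y : ∀ j : Fin d, EuclideanSpace ℝ (Fin (n j)) := fun j =>
        if h : j = i₀ then
          (WithLp.equiv 2 _).symm (fun a => w (Fin.cast (congrArg n h) a))
        else EuclideanSpace.single (k ⟨j, h⟩) (1:ℝ) with hy
      have hyi₀ : y i₀ = w := by
        simp only [hy, dif_pos rfl]
        rfl
      have hyj : ∀ (j : Fin d) (h : j ≠ i₀), y j = EuclideanSpace.single (k ⟨j, h⟩) (1:ℝ) := by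
        intro j h; simp only [hy, dif_neg h]
      have hynorm : ∀ j, ‖y j‖ = 1 := by
        intro j
        by_cases h : j = i₀
        · subst h; rw [hyi₀, hwn]
        · rw [hyj j h, EuclideanSpace.norm_single]; simp
      set X : ∀ j : Fin d, Metric.sphere (0 : EuclideanSpace ℝ (Fin (n j))) 1 :=
        fun j => ⟨y j, by rw [mem_sphere_zero_iff_norm]; exact hynorm j⟩ with hX
      have hval : (∑ i : ∀ j : Fin d, Fin (n j), T i * ∏ j, y j (i j)) = N := by
        rw [← Equiv.sum_comp e.symm (fun i => T i * ∏ j, y j (i j))]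
        rw [Fintype.sum_prod_type]
        have hterm : ∀ (a : Fin (n i₀)) (kk : K),
            T (e.symm (a, kk)) * ∏ j, y j (e.symm (a, kk) j)
              = v kk a * (w a * if kk = k then 1 else 0) := by
          intro a kk
          congr 1
          rw [← Finset.mul_prod_erase Finset.univ _ (Finset.mem_univ i₀)]
          congr 1
          · rw [hyi₀]
            exact congrArg (fun t => w t) (hfst a kk)
          · rw [show (∏ j ∈ Finset.univ.erase i₀, y j (e.symm (a, kk) j))
                = ∏ j ∈ Finset.univ.erase i₀,
                    (if h : j = i₀ then (0:ℝ) else if kk ⟨j, h⟩ = k ⟨j, h⟩ then 1 else 0) from ?_]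
            · by_cases hkk : kk = k
              · subst hkk
                rw [if_pos rfl, Finset.prod_eq_one]
                intro j hj
                rw [dif_neg (Finset.ne_of_mem_erase hj), if_pos rfl]
              · rw [if_neg hkk]
                obtain ⟨j0, hj0⟩ : ∃ j0 : { j : Fin d // j ≠ i₀ }, kk j0 ≠ k j0 := by
                  by_contra hc
                  push_neg at hc
                  exact hkk (funext hc)
                apply Finset.prod_eq_zero (i := (j0 : Fin d))
                  (by simp [Finset.mem_erase, j0.2])
                rw [dif_neg j0.2]
                simpa using hj0
            · apply Finset.prod_congr rfl
              intro j hj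
              have h : j ≠ i₀ := Finset.ne_of_mem_erase hj
              rw [dif_neg h, hyj j h]
              have hcoord : e.symm (a, kk) j = kk ⟨j, h⟩ := hsnd a kk j h
              rw [hcoord, EuclideanSpace.single_apply]
        calc (∑ a, ∑ kk : K, T (e.symm (a, kk)) * ∏ j, y j (e.symm (a, kk) j))
            = ∑ a, ∑ kk : K, v kk a * (w a * if kk = k then 1 else 0) := by
              apply Finset.sum_congr rfl; intro a _
              apply Finset.sum_congr rfl; intro kk _
              exact hterm a kk
          _ = ∑ a, v k a * w a := by
              apply Finset.sum_congr rfl; intro a _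
              rw [Finset.sum_eq_single k]
              · rw [if_pos rfl, mul_one]
              · intro kk _ hkk; rw [if_neg hkk, mul_zero, mul_zero]
              · intro h; exact absurd (Finset.mem_univ k) h
          _ = N⁻¹ * ∑ a, (v k a)^2 := by
              rw [Finset.mul_sum]
              apply Finset.sum_congr rfl; intro a _
              have : w a = N⁻¹ * v k a := by
                rw [hw]; rfl
              rw [this]; ring
          _ = N := by
              rw [← hNsq, sq]
              field_simp
      have hfX : f X = N := by
        rw [hf]
        simp only [hX]
        rw [hval]
        exact abs_of_nonneg (norm_nonneg u)
      have hNleS : N ≤ S := hfX ▸ hfS X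
      rw [← hNsq]
      exact pow_le_pow_left₀ (norm_nonneg u) hNleS 2
  -- put it together
  have hsum : (∑ i : ∀ j : Fin d, Fin (n j), T i ^ 2) = ∑ k : K, ∑ a, (v k a)^2 := by
    rw [← Equiv.sum_comp e.symm (fun i => T i ^ 2), Fintype.sum_prod_type, Finset.sum_comm]
  have hle : (∑ i : ∀ j : Fin d, Fin (n j), T i ^ 2)
      ≤ (∏ j ∈ Finset.univ.erase i₀, (n j : ℝ)) * S^2 := by
    rw [hsum, ← hcard]
    calc (∑ k : K, ∑ a, (v k a)^2) ≤ ∑ _k : K, S^2 := Finset.sum_le_sum fun k _ => key k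
      _ = (Fintype.card K : ℝ) * S^2 := by
        rw [Finset.sum_const, nsmul_eq_mul]; rfl
  calc Real.sqrt (∑ i : ∀ j : Fin d, Fin (n j), T i ^ 2)
      ≤ Real.sqrt ((∏ j ∈ Finset.univ.erase i₀, (n j : ℝ)) * S^2) := Real.sqrt_le_sqrt hle
    _ = Real.sqrt (∏ j ∈ Finset.univ.erase i₀, (n j : ℝ)) * S := by
        rw [Real.sqrt_mul (by positivity), Real.sqrt_sq hS0]
end

section
/- For every real d ≥ 1, 1/√(d+1) ≤ Γ(d + 1/2)/Γ(d+1) ≤ 1/√d (Gautschi's inequality for the Gamma function at s = 1/2). -/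
open Real

lemma gamma_midpoint_sq_le {x y : ℝ} (hx : 0 < x) (hy : 0 < y) :
    Real.Gamma ((x + y) / 2) ^ 2 ≤ Real.Gamma x * Real.Gamma y := by
  have h := Real.convexOn_log_Gamma.2 (Set.mem_Ioi.2 hx) (Set.mem_Ioi.2 hy)
    (by norm_num : (0:ℝ) ≤ 1/2) (by norm_num : (0:ℝ) ≤ 1/2) (by norm_num)
  simp only [Function.comp, smul_eq_mul] at h
  have hmid : (1/2 : ℝ) * x + (1/2 : ℝ) * y = (x + y) / 2 := by ring
  rw [hmid] at h
  have hGx := Real.Gamma_pos_of_pos hx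
  have hGy := Real.Gamma_pos_of_pos hy
  have hGm := Real.Gamma_pos_of_pos (by linarith : (0:ℝ) < (x + y)/2)
  have h2 : 2 * Real.log (Real.Gamma ((x + y) / 2)) ≤
      Real.log (Real.Gamma x) + Real.log (Real.Gamma y) := by linarith
  have := Real.exp_le_exp.2 h2
  rwa [Real.exp_add, Real.exp_log hGx, Real.exp_log hGy, two_mul, Real.exp_add,
    Real.exp_log hGm, ← sq] at this

/-- Gautschi's inequality at `s = 1/2`: for every real `d ≥ 1`,
`1/√(d+1) ≤ Γ(d + 1/2)/Γ(d+1) ≤ 1/√d`. -/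
theorem stmt_18 (d : ℝ) (hd : 1 ≤ d) :
    1 / Real.sqrt (d + 1) ≤ Real.Gamma (d + 1 / 2) / Real.Gamma (d + 1) ∧
    Real.Gamma (d + 1 / 2) / Real.Gamma (d + 1) ≤ 1 / Real.sqrt d := by
  have hd0 : (0:ℝ) < d := by linarith
  have hGd := Real.Gamma_pos_of_pos hd0
  have hGd1 := Real.Gamma_pos_of_pos (by linarith : (0:ℝ) < d + 1)
  have hGh := Real.Gamma_pos_of_pos (by linarith : (0:ℝ) < d + 1/2)
  have hrec : Real.Gamma (d + 1) = d * Real.Gamma d := by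
    rw [Real.Gamma_add_one (ne_of_gt hd0)]
  have hrec2 : Real.Gamma (d + 3/2) = (d + 1/2) * Real.Gamma (d + 1/2) := by
    have := Real.Gamma_add_one (ne_of_gt (by linarith : (0:ℝ) < d + 1/2))
    rw [show d + 1/2 + 1 = d + 3/2 by ring] at this
    exact this
  have hratio : 0 < Real.Gamma (d + 1/2) / Real.Gamma (d + 1) := div_pos hGh hGd1
  constructor
  · -- lower bound
    have key : Real.Gamma (d + 1) ^ 2 ≤ (d + 1/2) * Real.Gamma (d + 1/2) ^ 2 := by
      have := gamma_midpoint_sq_le (by linarith : (0:ℝ) < d + 1/2)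
        (by linarith : (0:ℝ) < d + 3/2)
      rw [show (d + 1/2 + (d + 3/2)) / 2 = d + 1 by ring, hrec2] at this
      nlinarith
    have hsq : (1 / Real.sqrt (d + 1)) ^ 2 ≤
        (Real.Gamma (d + 1/2) / Real.Gamma (d + 1)) ^ 2 := by
      rw [div_pow, one_pow, Real.sq_sqrt (by linarith : (0:ℝ) ≤ d + 1), div_pow]
      rw [div_le_div_iff₀ (by linarith) (pow_pos hGd1 2)]
      nlinarith
    have h1 : (0:ℝ) ≤ 1 / Real.sqrt (d + 1) :=
      div_nonneg zero_le_one (Real.sqrt_nonneg _)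
    nlinarith [hsq, hratio, h1]
  · -- upper bound
    have key : Real.Gamma (d + 1/2) ^ 2 ≤ Real.Gamma (d + 1) ^ 2 / d := by
      have := gamma_midpoint_sq_le hd0 (by linarith : (0:ℝ) < d + 1)
      rw [show (d + (d + 1)) / 2 = d + 1/2 by ring] at this
      rw [le_div_iff₀ hd0]
      nlinarith [hrec]
    have hsq : (Real.Gamma (d + 1/2) / Real.Gamma (d + 1)) ^ 2 ≤
        (1 / Real.sqrt d) ^ 2 := by
      rw [div_pow, div_pow, one_pow, Real.sq_sqrt hd0.le]
      rw [div_le_div_iff₀ (pow_pos hGd1 2) hd0]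
      have := (le_div_iff₀ hd0).1 key
      linarith
    have h1 : (0:ℝ) < 1 / Real.sqrt d :=
      div_pos one_pos (Real.sqrt_pos.2 hd0)
    nlinarith [hsq, hratio, h1]
end

section
/- For integers d ≥ 2 and odd n ≥ 3 with d ≥ n²/16, the generalized binomial coefficient C(d+n/2−1, d) := Γ(d+n/2)/(Γ(d+1)·Γ(n/2)) satisfies (d^(n/2−1)/Γ(n/2))·(1+1/(4d))^(-2) ≤ C(d+n/2−1,d) ≤ (d^(n/2−1)/Γ(n/2))·(1−n²/(16d))^(-2). -/
/-!
Write `n = 2m + 1`. Then `Γ(d + n/2) = Γ(d + 1/2) · ∏_{k<m} (d + 1/2 + k)` and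
`d^(n/2 - 1) = d^m / √d`. The product lies between `d^m` and, by AM–GM, `(d + m/2)^m`, while
log-convexity of `Γ` squeezes `Γ(d + 1/2) / Γ(d + 1)` between `1 / √(d + 1/2)` and `1 / √d`
(Gautschi). What remains are two instances of Bernoulli's inequality:
`√(d + 1/2) ≤ √d (1 + 1/(4d))²` and `(1 + m/(2d))^m (1 - n²/(16d))² ≤ 1`.
-/

open Finset

namespace Real

theorem Gamma_midpoint_sq_le {s t : ℝ} (hs : 0 < s) (ht : 0 < t) :
    Gamma ((s + t) / 2) ^ 2 ≤ Gamma s * Gamma t := by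
  have h := Gamma_mul_add_mul_le_rpow_Gamma_mul_rpow_Gamma hs ht (a := 1 / 2) (b := 1 / 2)
    (by norm_num) (by norm_num) (by norm_num)
  rw [← sqrt_eq_rpow, ← sqrt_eq_rpow, ← sqrt_mul (Gamma_pos_of_pos hs).le,
    show 1 / 2 * s + 1 / 2 * t = (s + t) / 2 by ring] at h
  exact (le_sqrt (Gamma_pos_of_pos (by positivity)).le (by positivity)).1 h

theorem sqrt_mul_Gamma_add_half_le_Gamma_add_one {x : ℝ} (hx : 0 < x) :
    √x * Gamma (x + 1 / 2) ≤ Gamma (x + 1) := by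
  have h := Gamma_midpoint_sq_le hx (by linarith : 0 < x + 1)
  rw [show (x + (x + 1)) / 2 = x + 1 / 2 by ring, Gamma_add_one hx.ne'] at h
  refine le_of_pow_le_pow_left₀ two_ne_zero (Gamma_pos_of_pos (by linarith)).le ?_
  rw [Gamma_add_one hx.ne', mul_pow, sq_sqrt hx.le]
  nlinarith [mul_le_mul_of_nonneg_left h hx.le]

theorem Gamma_add_one_le_sqrt_mul_Gamma_add_half {x : ℝ} (hx : -1 / 2 < x) :
    Gamma (x + 1) ≤ √(x + 1 / 2) * Gamma (x + 1 / 2) := by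
  have h := Gamma_midpoint_sq_le (by linarith : 0 < x + 1 / 2) (by linarith : 0 < x + 3 / 2)
  rw [show (x + 1 / 2 + (x + 3 / 2)) / 2 = x + 1 by ring,
    show x + 3 / 2 = x + 1 / 2 + 1 by ring, Gamma_add_one (s := x + 1 / 2) (by linarith)] at h
  refine le_of_pow_le_pow_left₀ two_ne_zero
    (mul_nonneg (sqrt_nonneg _) (Gamma_pos_of_pos (by linarith)).le) ?_
  rw [mul_pow, sq_sqrt (by linarith)]
  linarith

theorem Gamma_add_nat (x : ℝ) (hx : 0 < x) (m : ℕ) :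
    Gamma (x + m) = Gamma x * ∏ k ∈ range m, (x + k) := by
  induction m with
  | zero => simp
  | succ m ih =>
    rw [Nat.cast_succ, ← add_assoc, Gamma_add_one (by positivity), ih, prod_range_succ]
    ring

end Real

theorem prod_range_add_half_le_pow {x : ℝ} (hx : 0 ≤ x) (m : ℕ) :
    ∏ k ∈ range m, (x + 1 / 2 + k) ≤ (x + m / 2) ^ m := by
  induction m with
  | zero => simp
  | succ m ih =>
    have bernoulli := pow_add_mul_le_add_pow (a := x + m / 2) (b := 1 / 2) (by positivity)
      (by positivity) (m + 1)
    rw [prod_range_succ]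
    calc (∏ k ∈ range m, (x + 1 / 2 + k)) * (x + 1 / 2 + m)
        ≤ (x + m / 2) ^ m * (x + 1 / 2 + m) := by gcongr
      _ = (x + m / 2) ^ (m + 1) + (m + 1 : ℕ) * (x + m / 2) ^ m * (1 / 2) := by
        push_cast; ring
      _ ≤ (x + (m + 1 : ℕ) / 2) ^ (m + 1) := by
        simpa [add_assoc, add_div] using bernoulli

open Real

theorem Gamma_add_nat_add_half_div_Gamma_add_one_le {x : ℝ} (hx : 0 < x) (m : ℕ) :
    Gamma (x + (m + 1 / 2)) / Gamma (x + 1) ≤ (x + m / 2) ^ m / √x := by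
  rw [show x + (m + 1 / 2) = x + 1 / 2 + m by ring, Gamma_add_nat _ (by positivity),
    div_le_div_iff₀ (Gamma_pos_of_pos (by positivity)) (sqrt_pos.2 hx)]
  calc Gamma (x + 1 / 2) * (∏ k ∈ range m, (x + 1 / 2 + k)) * √x
      = (∏ k ∈ range m, (x + 1 / 2 + k)) * (√x * Gamma (x + 1 / 2)) := by ring
    _ ≤ (x + m / 2) ^ m * Gamma (x + 1) := by
      gcongr
      · exact prod_range_add_half_le_pow hx.le m
      · exact sqrt_mul_Gamma_add_half_le_Gamma_add_one hx

theorem pow_div_sqrt_le_Gamma_add_nat_add_half_div_Gamma_add_one {x : ℝ} (hx : 0 ≤ x)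
    (m : ℕ) :
    x ^ m / √(x + 1 / 2) ≤ Gamma (x + (m + 1 / 2)) / Gamma (x + 1) := by
  rw [show x + (m + 1 / 2) = x + 1 / 2 + m by ring, Gamma_add_nat _ (by positivity),
    div_le_div_iff₀ (sqrt_pos.2 (by positivity)) (Gamma_pos_of_pos (by positivity))]
  have hpow : x ^ m ≤ ∏ k ∈ range m, (x + 1 / 2 + k) := by
    calc x ^ m = ∏ _k ∈ range m, x := by rw [prod_const, card_range]
      _ ≤ _ := prod_le_prod (fun _ _ => hx) fun k _ => by
        linarith [(k.cast_nonneg : (0 : ℝ) ≤ k)]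
  calc x ^ m * Gamma (x + 1) ≤ x ^ m * (√(x + 1 / 2) * Gamma (x + 1 / 2)) := by
        gcongr; exact Gamma_add_one_le_sqrt_mul_Gamma_add_half (by linarith)
    _ ≤ (∏ k ∈ range m, (x + 1 / 2 + k)) * (√(x + 1 / 2) * Gamma (x + 1 / 2)) := by gcongr
    _ = Gamma (x + 1 / 2) * (∏ k ∈ range m, (x + 1 / 2 + k)) * √(x + 1 / 2) := by ring

theorem sqrt_add_half_le_sqrt_mul_one_add_sq {x : ℝ} (hx : 0 < x) :
    √(x + 1 / 2) ≤ √x * (1 + 1 / (4 * x)) ^ 2 := by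
  have hu : 0 < 1 / (4 * x) := by positivity
  have bernoulli := one_add_mul_le_pow (by linarith : -2 ≤ 1 / (4 * x)) 4
  have h : x + 1 / 2 ≤ x * ((1 + 1 / (4 * x)) ^ 2) ^ 2 := by
    rw [← pow_mul]
    calc x + 1 / 2 ≤ x * (1 + (4 : ℕ) * (1 / (4 * x))) := by
          field_simp; push_cast; linarith
      _ ≤ _ := by gcongr
  calc √(x + 1 / 2) ≤ √(x * ((1 + 1 / (4 * x)) ^ 2) ^ 2) := sqrt_le_sqrt h
    _ = √x * (1 + 1 / (4 * x)) ^ 2 := by rw [sqrt_mul hx.le, sqrt_sq (by positivity)]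

theorem add_half_pow_mul_one_sub_sq_le_pow {x : ℝ} (hx : 0 < x) {m : ℕ}
    (h : (2 * m + 1) ^ 2 ≤ 16 * x) :
    (x + m / 2) ^ m * (1 - (2 * m + 1) ^ 2 / (16 * x)) ^ 2 ≤ x ^ m := by
  set t := m / (2 * x) with ht
  have ht0 : 0 ≤ t := by positivity
  have ht2 : t ≤ 2 := by rw [ht, div_le_iff₀ (by positivity)]; nlinarith
  have hsub : 0 ≤ 1 - (2 * m + 1) ^ 2 / (16 * x) := by
    rw [sub_nonneg, div_le_one (by positivity)]; exact h
  have bernoulli : 1 - (2 * m + 1) ^ 2 / (16 * x) ≤ (1 - t / 2) ^ m := by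
    calc 1 - (2 * m + 1) ^ 2 / (16 * x) ≤ 1 + m * (-(t / 2)) := by
          rw [ht]; field_simp; nlinarith [(m.cast_nonneg : (0 : ℝ) ≤ m)]
      _ ≤ (1 + -(t / 2)) ^ m := one_add_mul_le_pow (by linarith) m
      _ = (1 - t / 2) ^ m := by ring
  -- `(1 + t)(1 - t/2)² = 1 - t²(3 - t)/4`
  have hcubic : (1 + t) * (1 - t / 2) ^ 2 ≤ 1 := by nlinarith [sq_nonneg t]
  calc (x + m / 2) ^ m * (1 - (2 * m + 1) ^ 2 / (16 * x)) ^ 2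
      ≤ (x * (1 + t)) ^ m * ((1 - t / 2) ^ m) ^ 2 := by
        rw [ht, mul_add, mul_one, mul_div_assoc', mul_comm x m, mul_div_mul_right _ _ hx.ne']
        gcongr
    _ = x ^ m * ((1 + t) * (1 - t / 2) ^ 2) ^ m := by
        rw [mul_pow x, mul_pow (1 + t), ← pow_mul, ← pow_mul, mul_comm m 2]; ring
    _ ≤ x ^ m * 1 := by gcongr; exact pow_le_one₀ (by positivity) hcubic
    _ = x ^ m := mul_one _

theorem stmt_19_general (d n : ℕ) (hodd : Odd n)
    (hdn : (n : ℝ) ^ 2 / 16 ≤ d) :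
    (d : ℝ) ^ ((n : ℝ) / 2 - 1) / Real.Gamma ((n : ℝ) / 2) / (1 + 1 / (4 * d)) ^ 2 ≤
      Real.Gamma ((d : ℝ) + (n : ℝ) / 2) / (Real.Gamma ((d : ℝ) + 1) * Real.Gamma ((n : ℝ) / 2)) ∧
    Real.Gamma ((d : ℝ) + (n : ℝ) / 2) / (Real.Gamma ((d : ℝ) + 1) * Real.Gamma ((n : ℝ) / 2)) ≤
      (d : ℝ) ^ ((n : ℝ) / 2 - 1) / Real.Gamma ((n : ℝ) / 2) / (1 - (n : ℝ) ^ 2 / (16 * d)) ^ 2 := by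
  obtain ⟨m, rfl⟩ := hodd
  -- `n² ≠ 16 d` since `n` is odd, so the upper bound is not the junk value `… / 0 = 0`
  have hlt : ((2 * m + 1 : ℕ) : ℝ) ^ 2 < 16 * d := by
    have hle : (2 * m + 1) ^ 2 ≤ 16 * d := by
      exact_mod_cast (div_le_iff₀ (by norm_num : (0 : ℝ) < 16)).1 hdn |>.trans_eq (mul_comm _ _)
    have hne : (2 * m + 1) ^ 2 ≠ 16 * d := fun h =>
      Nat.not_even_iff_odd.2 ((odd_two_mul_add_one m).pow (n := 2)) (h ▸ ⟨8 * d, by ring⟩)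
    exact_mod_cast hle.lt_of_ne hne
  have hn : ((2 * m + 1 : ℕ) : ℝ) = 2 * m + 1 := by push_cast; ring
  rw [hn] at hlt ⊢
  have hd : (0 : ℝ) < d := by linarith [sq_nonneg (2 * m + 1 : ℝ)]
  rw [show (2 * m + 1 : ℝ) / 2 = m + 1 / 2 by ring,
    show (m + 1 / 2 - 1 : ℝ) = m - 1 / 2 by ring, rpow_sub hd, rpow_natCast, ← sqrt_eq_rpow, ← div_div (Gamma _)]
  constructor
  · calc (d : ℝ) ^ m / √d / Gamma (m + 1 / 2) / (1 + 1 / (4 * d)) ^ 2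
        = d ^ m / (√d * (1 + 1 / (4 * d)) ^ 2) / Gamma (m + 1 / 2) := by field_simp
      _ ≤ d ^ m / √(d + 1 / 2) / Gamma (m + 1 / 2) := by
        gcongr; exact sqrt_add_half_le_sqrt_mul_one_add_sq hd
      _ ≤ _ := by
        gcongr ?_ / _; exact pow_div_sqrt_le_Gamma_add_nat_add_half_div_Gamma_add_one hd.le m
  · set ε := 1 - (2 * m + 1 : ℝ) ^ 2 / (16 * d) with hε
    have hε0 : 0 < ε := by rw [hε, sub_pos, div_lt_one (by positivity)]; exact hlt
    calc _ ≤ (d + m / 2 : ℝ) ^ m / √d / Gamma (m + 1 / 2) := by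
          gcongr ?_ / _; exact Gamma_add_nat_add_half_div_Gamma_add_one_le hd m
      _ = (d + m / 2 : ℝ) ^ m * ε ^ 2 / √d / Gamma (m + 1 / 2) / ε ^ 2 := by field_simp
      _ ≤ _ := by gcongr; exact add_half_pow_mul_one_sub_sq_le_pow hd hlt.le

/-- For integers `d ≥ 2` and odd `n ≥ 3` with `d ≥ n²/16`, the generalized binomial
coefficient `C(d+n/2−1, d) = Γ(d+n/2)/(Γ(d+1)·Γ(n/2))` satisfies
`(d^(n/2−1)/Γ(n/2))·(1+1/(4d))⁻² ≤ C(d+n/2−1,d) ≤ (d^(n/2−1)/Γ(n/2))·(1−n²/(16d))⁻²`. -/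
theorem stmt_19 (d n : ℕ) (hd : 2 ≤ d) (hn : 3 ≤ n) (hodd : Odd n)
    (hdn : (n : ℝ) ^ 2 / 16 ≤ d) :
    (d : ℝ) ^ ((n : ℝ) / 2 - 1) / Real.Gamma ((n : ℝ) / 2) / (1 + 1 / (4 * d)) ^ 2 ≤
      Real.Gamma ((d : ℝ) + (n : ℝ) / 2) / (Real.Gamma ((d : ℝ) + 1) * Real.Gamma ((n : ℝ) / 2)) ∧
    Real.Gamma ((d : ℝ) + (n : ℝ) / 2) / (Real.Gamma ((d : ℝ) + 1) * Real.Gamma ((n : ℝ) / 2)) ≤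
      (d : ℝ) ^ ((n : ℝ) / 2 - 1) / Real.Gamma ((n : ℝ) / 2) / (1 - (n : ℝ) ^ 2 / (16 * d)) ^ 2 :=
  stmt_19_general d n hodd hdn
end
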